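/- arXiv:math-ph/0507067 — 5 statements merged into one kernel-verified Lean document; each statement's English description precedes it below -/
import Mathlib

section
/- Let X be a boundary pair and let R′ be any subset of R_X containing f_X. Let χ be the set of boundary pairs X′ = (R_{X′}, s_{X′}, B_{X′}, B′_{X′}) such that R_{X′} = R′, s_{X′} = s_X, B_{X′} agrees with B_X on the boundary edges common to R′ and R_X, and B′_{X′} agrees with B′_X on those common boundary edges. Then ν(X) ≤ max_{X′ ∈ χ} μ(X′). -/
namespace PottsBP

/-- Vertices of the integer lattice ℤ². -/
abbrev V : Type := ℤ × ℤ

/-- Lattice adjacency on ℤ². -/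
def Adj (x y : V) : Prop := (x.1 - y.1).natAbs + (x.2 - y.2).natAbs = 1

/-- `(u, v)` is a boundary edge of `R`, oriented with `u` outside `R` and `v` inside. -/
def IsBdryEdge (R : Finset V) (u v : V) : Prop := u ∉ R ∧ v ∈ R ∧ Adj u v

/-- Configurations on region `R` with spins `{1,…,q}`, extended by `0` off `R`. -/
def Configs (q : ℕ) (R : Finset V) : Set (V → ℕ) :=
  {σ | (∀ v ∈ R, 1 ≤ σ v ∧ σ v ≤ q) ∧ ∀ v ∉ R, σ v = 0}

/-- A boundary pair: a nonempty finite region `R`, a distinguished boundary edge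
`s = (w, f)` with `f ∈ R`, and a pair `(B, B')` of boundary configurations (maps from
boundary edges, represented by their (outside, inside) endpoint pairs, to `{0,…,q}`,
with `0` denoting a free edge) that differ only on `s`, assign spins from `{1,…,q}`
to `s`, and such that any two perpendicular boundary edges sharing their outside
endpoint get the same spin in at least one of `B`, `B'`. -/
structure BoundaryPair (q : ℕ) where
  R : Finset V
  w : V
  f : V
  hw : w ∉ R
  hf : f ∈ R
  hadj : Adj w f
  B : V × V → ℕ
  B' : V × V → ℕ
  hBrange : ∀ u v, IsBdryEdge R u v → B (u, v) ≤ q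
  hB'range : ∀ u v, IsBdryEdge R u v → B' (u, v) ≤ q
  hagree : ∀ u v, IsBdryEdge R u v → (u, v) ≠ (w, f) → B (u, v) = B' (u, v)
  hBs : 1 ≤ B (w, f) ∧ B (w, f) ≤ q
  hB's : 1 ≤ B' (w, f) ∧ B' (w, f) ≤ q
  hperp : ∀ u v₁ v₂, IsBdryEdge R u v₁ → IsBdryEdge R u v₂ →
    (v₁.1 - u.1) * (v₂.1 - u.1) + (v₁.2 - u.2) * (v₂.2 - u.2) = 0 →
    B (u, v₁) = B (u, v₂) ∨ B' (u, v₁) = B' (u, v₂)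

variable {q : ℕ}

/-- The number of monochromatic internal edges of `R` under `σ`. -/
noncomputable def monInt (R : Finset V) (σ : V → ℕ) : ℕ :=
  Set.ncard {e : Sym2 V | ∃ x y : V, e = s(x, y) ∧ Adj x y ∧ x ∈ R ∧ y ∈ R ∧ σ x = σ y}

/-- `mon_σ(E(R_X) − {s_X})` for the boundary pair `X`: the number of monochromatic
edges, excluding the distinguished edge `s_X`, where a boundary edge is monochromatic
if its spin under `B_X` is in `{1,…,q}` and equals the spin `σ` gives its inner
endpoint. -/
noncomputable def monExS (X : BoundaryPair q) (σ : V → ℕ) : ℕ :=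
  monInt X.R σ + Set.ncard {p : V × V | IsBdryEdge X.R p.1 p.2 ∧ p ≠ (X.w, X.f) ∧
    1 ≤ X.B p ∧ X.B p = σ p.2}

/-- `mon_σ(E(R_X))` with respect to an arbitrary boundary configuration `Bc`. -/
noncomputable def monFull (X : BoundaryPair q) (Bc : V × V → ℕ) (σ : V → ℕ) : ℕ :=
  monInt X.R σ + Set.ncard {p : V × V | IsBdryEdge X.R p.1 p.2 ∧
    1 ≤ Bc p ∧ Bc p = σ p.2}

/-- `c_i`: the total weight (ignoring the edge `s_X`) of the configurations that
assign spin `i` to `f_X`. -/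
noncomputable def ci (X : BoundaryPair q) (lam : ℝ) (i : ℕ) : ℝ :=
  ∑ᶠ σ ∈ {σ ∈ Configs q X.R | σ X.f = i}, lam ^ monExS X σ

/-- `c = Σ_{i ∉ C} c_i` where `C = {B_X(s_X), B'_X(s_X)}`. -/
noncomputable def cOut (X : BoundaryPair q) (lam : ℝ) : ℝ :=
  ∑ i ∈ (Finset.Icc 1 q).filter
      (fun i => i ≠ X.B (X.w, X.f) ∧ i ≠ X.B' (X.w, X.f)), ci X lam i

/-- `μ(X) = max_{i ∈ C} (1−λ)c_i / ((1+λ)c_i + c)`. -/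
noncomputable def mu (X : BoundaryPair q) (lam : ℝ) : ℝ :=
  max ((1 - lam) * ci X lam (X.B (X.w, X.f)) /
        ((1 + lam) * ci X lam (X.B (X.w, X.f)) + cOut X lam))
      ((1 - lam) * ci X lam (X.B' (X.w, X.f)) /
        ((1 + lam) * ci X lam (X.B' (X.w, X.f)) + cOut X lam))

/-- The partition function of `X` with boundary configuration `Bc`. -/
noncomputable def Zbp (X : BoundaryPair q) (lam : ℝ) (Bc : V × V → ℕ) : ℝ :=
  ∑ᶠ σ ∈ Configs q X.R, lam ^ monFull X Bc σ

/-- The Gibbs distribution `π_{Bc}` on configurations of `R_X`. -/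
noncomputable def gibbsbp (X : BoundaryPair q) (lam : ℝ) (Bc : V × V → ℕ)
    (σ : V → ℕ) : ℝ :=
  lam ^ monFull X Bc σ / Zbp X lam Bc

/-- `ψ` is a coupling of `π_{B_X}` and `π_{B'_X}`. -/
def IsCoupling (X : BoundaryPair q) (lam : ℝ)
    (ψ : (V → ℕ) × (V → ℕ) → ℝ) : Prop :=
  (∀ p, 0 ≤ ψ p) ∧
  (∀ p : (V → ℕ) × (V → ℕ),
    (p.1 ∉ Configs q X.R ∨ p.2 ∉ Configs q X.R) → ψ p = 0) ∧
  (∀ σ ∈ Configs q X.R, (∑ᶠ σ' ∈ Configs q X.R, ψ (σ, σ')) = gibbsbp X lam X.B σ) ∧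
  (∀ σ' ∈ Configs q X.R, (∑ᶠ σ ∈ Configs q X.R, ψ (σ, σ')) = gibbsbp X lam X.B' σ')

/-- The probability that a pair drawn from `ψ` disagrees at `f_X`. -/
noncomputable def disagree (X : BoundaryPair q)
    (ψ : (V → ℕ) × (V → ℕ) → ℝ) : ℝ :=
  ∑ᶠ p ∈ {p : (V → ℕ) × (V → ℕ) | p.1 X.f ≠ p.2 X.f}, ψ p

/-- `ν(X)`: the minimum, over couplings `ψ` of `π_{B_X}` and `π_{B'_X}`, of the
probability that a pair drawn from `ψ` disagrees at `f_X`. -/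
noncomputable def nu (X : BoundaryPair q) (lam : ℝ) : ℝ :=
  sInf {r : ℝ | ∃ ψ, IsCoupling X lam ψ ∧ r = disagree X ψ}


/-! ### Auxiliary machinery -/

section Aux

lemma adj_symm {x y : V} (h : Adj x y) : Adj y x := by
  unfold Adj at *; omega

lemma adj_casesV {x y : V} (h : Adj x y) :
    x - y = ((1:ℤ),(0:ℤ)) ∨ x - y = (-1,0) ∨ x - y = (0,1) ∨ x - y = (0,-1) := by
  unfold Adj at h
  rcases x with ⟨a,b⟩; rcases y with ⟨c,d⟩
  simp only [Prod.mk_sub_mk, Prod.mk.injEq] at *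
  omega

lemma configs_finite (q : ℕ) (R : Finset V) : (Configs q R).Finite := by
  have : Set.InjOn (fun (σ : V → ℕ) => (fun v : {x // x ∈ R} => (⟨min (σ v.1) q, by omega⟩ : Fin (q+1)))) (Configs q R) := by
    intro σ₁ h₁ σ₂ h₂ heq
    funext v
    by_cases hv : v ∈ R
    · have := congrFun heq ⟨v, hv⟩
      simp only [Fin.mk.injEq] at this
      have b1 := h₁.1 v hv; have b2 := h₂.1 v hv
      omega
    · rw [h₁.2 v hv, h₂.2 v hv]
  exact Set.Finite.of_finite_image (Set.Finite.subset (Set.finite_univ) (Set.subset_univ _)) this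

noncomputable def cfin (q : ℕ) (R : Finset V) : Finset (V → ℕ) := (configs_finite q R).toFinset

lemma mem_cfin {R : Finset V} {σ : V → ℕ} : σ ∈ cfin q R ↔ σ ∈ Configs q R :=
  Set.Finite.mem_toFinset _

lemma finsum_configs {R : Finset V} (F : (V → ℕ) → ℝ) :
    ∑ᶠ σ ∈ Configs q R, F σ = ∑ σ ∈ cfin q R, F σ := by
  rw [← finsum_mem_coe_finset]
  congr 1
  exact (Set.Finite.coe_toFinset _).symm ▸ rfl

lemma finsum_configs_filter {R : Finset V} (F : (V → ℕ) → ℝ) (P : (V → ℕ) → Prop)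
    [DecidablePred P] :
    ∑ᶠ σ ∈ {σ ∈ Configs q R | P σ}, F σ = ∑ σ ∈ (cfin q R).filter P, F σ := by
  rw [← finsum_mem_coe_finset]
  congr 1
  ext σ
  simp [mem_cfin, Set.mem_setOf_eq]

lemma finite_sym2 (A B : Finset V) (S : Set (Sym2 V))
    (h : ∀ e ∈ S, ∃ x y : V, e = s(x,y) ∧ x ∈ A ∧ y ∈ B) : S.Finite := by
  apply Set.Finite.subset (Set.Finite.image (fun p : V × V => s(p.1, p.2))
    (Set.Finite.prod A.finite_toSet B.finite_toSet))
  intro e he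
  obtain ⟨x, y, rfl, hx, hy⟩ := h e he
  exact ⟨(x,y), ⟨hx, hy⟩, rfl⟩

lemma finite_pairs (A : Finset V) (S : Set (V × V))
    (h : ∀ p ∈ S, p.2 ∈ A ∧ Adj p.1 p.2) : S.Finite := by
  apply Set.Finite.subset (Set.Finite.image (fun pd : V × V => (pd.1 + pd.2, pd.1))
    (Set.Finite.prod A.finite_toSet (Set.toFinite ({((1:ℤ),(0:ℤ)), (-1,0), (0,1), (0,-1)} : Set V))))
  intro p hp
  obtain ⟨hA, hadj⟩ := h p hp
  refine ⟨(p.2, p.1 - p.2), ⟨hA, ?_⟩, ?_⟩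
  · rcases adj_casesV hadj with h | h | h | h <;> simp [h]
  · simp

def combine (R' : Finset V) (τ ρ : V → ℕ) : V → ℕ := fun v => if v ∈ R' then ρ v else τ v
def restrict (S : Finset V) (σ : V → ℕ) : V → ℕ := fun v => if v ∈ S then σ v else 0

lemma combine_mem {R R' : Finset V} (hsub : R' ⊆ R) {τ ρ : V → ℕ}
    (hτ : τ ∈ Configs q (R \ R')) (hρ : ρ ∈ Configs q R') :
    combine R' τ ρ ∈ Configs q R := by
  constructor
  · intro v hv
    by_cases hv' : v ∈ R'
    · simpa [combine, hv'] using hρ.1 v hv'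
    · have : v ∈ R \ R' := Finset.mem_sdiff.2 ⟨hv, hv'⟩
      simpa [combine, hv'] using hτ.1 v this
  · intro v hv
    have hv' : v ∉ R' := fun h => hv (hsub h)
    have : v ∉ R \ R' := fun h => hv (Finset.mem_sdiff.1 h).1
    simpa [combine, hv'] using hτ.2 v this

lemma restrict_mem {R S : Finset V} (hsub : S ⊆ R) {σ : V → ℕ}
    (hσ : σ ∈ Configs q R) : restrict S σ ∈ Configs q S := by
  constructor
  · intro v hv; simpa [restrict, hv] using hσ.1 v (hsub hv)
  · intro v hv; simp [restrict, hv]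

lemma combine_restrict {R R' : Finset V} {σ : V → ℕ}
    (hσ : σ ∈ Configs q R) :
    combine R' (restrict (R \ R') σ) (restrict R' σ) = σ := by
  funext v
  by_cases hv' : v ∈ R'
  · simp [combine, restrict, hv']
  · by_cases hv : v ∈ R
    · simp [combine, restrict, hv', Finset.mem_sdiff.2 ⟨hv, hv'⟩]
    · have : v ∉ R \ R' := fun h => hv (Finset.mem_sdiff.1 h).1
      simp [combine, restrict, hv', this, hσ.2 v hv]

lemma restrict_combine_left {R R' : Finset V} {τ ρ : V → ℕ} (hτ : τ ∈ Configs q (R \ R')) :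
    restrict (R \ R') (combine R' τ ρ) = τ := by
  funext v
  by_cases hv : v ∈ R \ R'
  · simp [restrict, combine, hv, (Finset.mem_sdiff.1 hv).2]
  · simp [restrict, hv, hτ.2 v hv]

lemma restrict_combine_right {R' : Finset V} {τ ρ : V → ℕ} (hρ : ρ ∈ Configs q R') :
    restrict R' (combine R' τ ρ) = ρ := by
  funext v
  by_cases hv : v ∈ R'
  · simp [restrict, combine, hv]
  · simp [restrict, hv, hρ.2 v hv]

/-- Splitting a sum over configurations on `R` as a double sum. -/
lemma sum_configs_split {R R' : Finset V} (hsub : R' ⊆ R) (F : (V → ℕ) → ℝ) :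
    ∑ σ ∈ cfin q R, F σ
      = ∑ τ ∈ cfin q (R \ R'), ∑ ρ ∈ cfin q R', F (combine R' τ ρ) := by
  rw [← Finset.sum_product']
  apply Finset.sum_bij' (i := fun σ _ => (restrict (R \ R') σ, restrict R' σ))
    (j := fun p _ => combine R' p.1 p.2)
  · intro σ hσ
    rw [mem_cfin] at hσ
    exact Finset.mem_product.2 ⟨mem_cfin.2 (restrict_mem (Finset.sdiff_subset) hσ),
      mem_cfin.2 (restrict_mem hsub hσ)⟩
  · intro p hp
    rw [Finset.mem_product] at hp
    exact mem_cfin.2 (combine_mem hsub (mem_cfin.1 hp.1) (mem_cfin.1 hp.2))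
  · intro σ hσ
    exact combine_restrict (mem_cfin.1 hσ)
  · intro p hp
    rw [Finset.mem_product] at hp
    exact Prod.ext (restrict_combine_left (mem_cfin.1 hp.1)) (restrict_combine_right (mem_cfin.1 hp.2))
  · intro σ hσ
    rw [combine_restrict (mem_cfin.1 hσ)]

/-- cross pairs between `R \ R'` and `R'` that are monochromatic -/
def crossSet (R R' : Finset V) (τ ρ : V → ℕ) : Set (V × V) :=
  {p : V × V | p.1 ∈ R \ R' ∧ p.2 ∈ R' ∧ Adj p.1 p.2 ∧ τ p.1 = ρ p.2}

lemma monInt_split (R R' : Finset V) (hsub : R' ⊆ R) (τ ρ : V → ℕ) :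
    monInt R (combine R' τ ρ)
      = monInt R' ρ + monInt (R \ R') τ + (crossSet R R' τ ρ).ncard := by
  classical
  set σ := combine R' τ ρ with hσdef
  have hσR' : ∀ v ∈ R', σ v = ρ v := fun v hv => by simp [hσdef, combine, hv]
  have hσout : ∀ v, v ∉ R' → σ v = τ v := fun v hv => by simp [hσdef, combine, hv]
  set E1 : Set (Sym2 V) := {e | ∃ x y : V, e = s(x, y) ∧ Adj x y ∧ x ∈ R' ∧ y ∈ R' ∧ ρ x = ρ y} with hE1
  set E2 : Set (Sym2 V) := {e | ∃ x y : V, e = s(x, y) ∧ Adj x y ∧ x ∈ R \ R' ∧ y ∈ R \ R' ∧ τ x = τ y} with hE2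
  set E3 : Set (Sym2 V) := {e | ∃ x y : V, e = s(x, y) ∧ Adj x y ∧ x ∈ R \ R' ∧ y ∈ R' ∧ τ x = ρ y} with hE3
  have hE1fin : E1.Finite := finite_sym2 R' R' _ (by rintro e ⟨x,y,rfl,_,hx,hy,_⟩; exact ⟨x,y,rfl,hx,hy⟩)
  have hE2fin : E2.Finite := finite_sym2 (R \ R') (R \ R') _ (by rintro e ⟨x,y,rfl,_,hx,hy,_⟩; exact ⟨x,y,rfl,hx,hy⟩)
  have hE3fin : E3.Finite := finite_sym2 (R \ R') R' _ (by rintro e ⟨x,y,rfl,_,hx,hy,_⟩; exact ⟨x,y,rfl,hx,hy⟩)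
  have hsplit : {e : Sym2 V | ∃ x y : V, e = s(x, y) ∧ Adj x y ∧ x ∈ R ∧ y ∈ R ∧ σ x = σ y}
      = E1 ∪ (E2 ∪ E3) := by
    ext e
    constructor
    · rintro ⟨x, y, rfl, hadj, hx, hy, hmono⟩
      by_cases hx' : x ∈ R' <;> by_cases hy' : y ∈ R'
      · exact Or.inl ⟨x, y, rfl, hadj, hx', hy', by rw [← hσR' x hx', ← hσR' y hy']; exact hmono⟩
      · refine Or.inr (Or.inr ⟨y, x, Sym2.eq_swap, adj_symm hadj, Finset.mem_sdiff.2 ⟨hy, hy'⟩, hx', ?_⟩)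
        rw [← hσout y hy', ← hσR' x hx']; exact hmono.symm
      · exact Or.inr (Or.inr ⟨x, y, rfl, hadj, Finset.mem_sdiff.2 ⟨hx, hx'⟩, hy',
          by rw [← hσout x hx', ← hσR' y hy']; exact hmono⟩)
      · exact Or.inr (Or.inl ⟨x, y, rfl, hadj, Finset.mem_sdiff.2 ⟨hx, hx'⟩,
          Finset.mem_sdiff.2 ⟨hy, hy'⟩, by rw [← hσout x hx', ← hσout y hy']; exact hmono⟩)
    · rintro (⟨x, y, rfl, hadj, hx, hy, hmono⟩ | ⟨x, y, rfl, hadj, hx, hy, hmono⟩ | ⟨x, y, rfl, hadj, hx, hy, hmono⟩)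
      · exact ⟨x, y, rfl, hadj, hsub hx, hsub hy, by rw [hσR' x hx, hσR' y hy]; exact hmono⟩
      · exact ⟨x, y, rfl, hadj, (Finset.mem_sdiff.1 hx).1, (Finset.mem_sdiff.1 hy).1,
          by rw [hσout x (Finset.mem_sdiff.1 hx).2, hσout y (Finset.mem_sdiff.1 hy).2]; exact hmono⟩
      · exact ⟨x, y, rfl, hadj, (Finset.mem_sdiff.1 hx).1, hsub hy,
          by rw [hσout x (Finset.mem_sdiff.1 hx).2, hσR' y hy]; exact hmono⟩
  have hd1 : Disjoint E1 (E2 ∪ E3) := by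
    rw [Set.disjoint_left]
    rintro e ⟨x, y, rfl, _, hx, hy, _⟩ (⟨x', y', heq, _, hx', hy', _⟩ | ⟨x', y', heq, _, hx', hy', _⟩) <;>
    · rw [Sym2.eq_iff] at heq
      rcases heq with ⟨h1, h2⟩ | ⟨h1, h2⟩ <;>
        first
          | exact (Finset.mem_sdiff.1 (h1 ▸ hx')).2 (by simpa [← h1] using hx)
          | exact (Finset.mem_sdiff.1 (h2 ▸ hx')).2 (by simpa [← h2] using hy)
  have hd2 : Disjoint E2 E3 := by
    rw [Set.disjoint_left]
    rintro e ⟨x, y, rfl, _, hx, hy, _⟩ ⟨x', y', heq, _, hx', hy', _⟩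
    rw [Sym2.eq_iff] at heq
    rcases heq with ⟨h1, h2⟩ | ⟨h1, h2⟩
    · exact (Finset.mem_sdiff.1 hy).2 (h2 ▸ hy')
    · exact (Finset.mem_sdiff.1 hx).2 (h1 ▸ hy')
  have hE3card : E3.ncard = (crossSet R R' τ ρ).ncard := by
    have himg : E3 = (fun p : V × V => s(p.1, p.2)) '' (crossSet R R' τ ρ) := by
      ext e
      constructor
      · rintro ⟨x, y, rfl, hadj, hx, hy, hmono⟩
        exact ⟨(x, y), ⟨hx, hy, hadj, hmono⟩, rfl⟩
      · rintro ⟨⟨x, y⟩, ⟨hx, hy, hadj, hmono⟩, rfl⟩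
        exact ⟨x, y, rfl, hadj, hx, hy, hmono⟩
    rw [himg]
    apply Set.ncard_image_of_injOn
    rintro ⟨x, y⟩ ⟨hx, hy, _, _⟩ ⟨x', y'⟩ ⟨hx', hy', _, _⟩ heq
    simp only [Sym2.eq_iff] at heq
    rcases heq with ⟨h1, h2⟩ | ⟨h1, h2⟩
    · simp [Prod.ext_iff, h1, h2]
    · exact absurd (h1 ▸ hy') (Finset.mem_sdiff.1 hx).2
  rw [monInt, hsplit, Set.ncard_union_eq hd1 hE1fin (hE2fin.union hE3fin),
    Set.ncard_union_eq hd2 hE2fin hE3fin, hE3card, monInt, monInt, hE1, hE2]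
  omega

end Aux

section Restrict

variable (X : BoundaryPair q) (R' : Finset V)

/-- The boundary pair obtained by restricting `X` to subregion `R'`, with spins of a
configuration `τ` on `X.R \ R'` as extra boundary conditions. -/
def restrictBP (hsub : R' ⊆ X.R) (hfR' : X.f ∈ R') (τ : V → ℕ) : BoundaryPair q where
  R := R'
  w := X.w
  f := X.f
  hw := fun h => X.hw (hsub h)
  hf := hfR'
  hadj := X.hadj
  B := fun p => if p.1 ∈ X.R then min (τ p.1) q else X.B p
  B' := fun p => if p.1 ∈ X.R then min (τ p.1) q else X.B' p
  hBrange := by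
    intro u v ⟨hu, hv, hadj⟩
    by_cases h : u ∈ X.R
    · simp [h]
    · simpa [h] using X.hBrange u v ⟨h, hsub hv, hadj⟩
  hB'range := by
    intro u v ⟨hu, hv, hadj⟩
    by_cases h : u ∈ X.R
    · simp [h]
    · simpa [h] using X.hB'range u v ⟨h, hsub hv, hadj⟩
  hagree := by
    intro u v ⟨hu, hv, hadj⟩ hne
    by_cases h : u ∈ X.R
    · simp [h]
    · simpa [h] using X.hagree u v ⟨h, hsub hv, hadj⟩ hne
  hBs := by simpa [X.hw] using X.hBs
  hB's := by simpa [X.hw] using X.hB's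
  hperp := by
    intro u v₁ v₂ ⟨hu1, hv1, hadj1⟩ ⟨hu2, hv2, hadj2⟩ hperp
    by_cases h : u ∈ X.R
    · simp [h]
    · simpa [h] using X.hperp u v₁ v₂ ⟨h, hsub hv1, hadj1⟩ ⟨h, hsub hv2, hadj2⟩ hperp

/-- The number of monochromatic edges not meeting `R'` (w.r.t. boundary condition `X.B`). -/
noncomputable def Kout (τ : V → ℕ) : ℕ :=
  monInt (X.R \ R') τ + Set.ncard {p : V × V | IsBdryEdge X.R p.1 p.2 ∧ p.2 ∉ R' ∧
    1 ≤ X.B p ∧ X.B p = τ p.2}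

lemma monExS_restrict (hsub : R' ⊆ X.R) (hfR' : X.f ∈ R') {τ ρ : V → ℕ}
    (hτ : τ ∈ Configs q (X.R \ R')) :
    monExS X (combine R' τ ρ)
      = Kout X R' τ + monExS (restrictBP X R' hsub hfR' τ) ρ := by
  classical
  set σ := combine R' τ ρ with hσdef
  have hσR' : ∀ v ∈ R', σ v = ρ v := fun v hv => by simp [hσdef, combine, hv]
  have hσout : ∀ v, v ∉ R' → σ v = τ v := fun v hv => by simp [hσdef, combine, hv]
  -- the boundary sets
  set BOut : Set (V × V) := {p : V × V | IsBdryEdge X.R p.1 p.2 ∧ p.2 ∉ R' ∧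
    1 ≤ X.B p ∧ X.B p = τ p.2} with hBOut
  set BIn : Set (V × V) := {p : V × V | IsBdryEdge X.R p.1 p.2 ∧ p.2 ∈ R' ∧ p ≠ (X.w, X.f) ∧
    1 ≤ X.B p ∧ X.B p = ρ p.2} with hBIn
  have hBOutfin : BOut.Finite := finite_pairs X.R _ (by rintro p ⟨⟨_, h2, h3⟩, _⟩; exact ⟨h2, h3⟩)
  have hBInfin : BIn.Finite := finite_pairs X.R _ (by rintro p ⟨⟨_, h2, h3⟩, _⟩; exact ⟨h2, h3⟩)
  have hCrossfin : (crossSet X.R R' τ ρ).Finite := finite_pairs R' _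
    (by rintro p ⟨_, h2, h3, _⟩; exact ⟨h2, h3⟩)
  -- split the boundary set of `monExS X σ`
  have hbsplit : {p : V × V | IsBdryEdge X.R p.1 p.2 ∧ p ≠ (X.w, X.f) ∧
      1 ≤ X.B p ∧ X.B p = σ p.2} = BOut ∪ BIn := by
    ext ⟨u, v⟩
    constructor
    · rintro ⟨hbe, hne, hge, heq⟩
      by_cases hv' : v ∈ R'
      · exact Or.inr ⟨hbe, hv', hne, hge, by rwa [hσR' v hv'] at heq⟩
      · exact Or.inl ⟨hbe, hv', hge, by rwa [hσout v hv'] at heq⟩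
    · rintro (⟨hbe, hv', hge, heq⟩ | ⟨hbe, hv', hne, hge, heq⟩)
      · refine ⟨hbe, ?_, hge, by rwa [hσout v hv']⟩
        intro hc
        apply hv'
        have : v = X.f := (Prod.ext_iff.1 hc).2
        rw [this]; exact hfR'
      · exact ⟨hbe, hne, hge, by rwa [hσR' v hv']⟩
  have hbdisj : Disjoint BOut BIn := by
    rw [Set.disjoint_left]
    rintro ⟨u, v⟩ ⟨_, hv', _, _⟩ ⟨_, hv'', _, _⟩
    exact hv' hv''
  -- identify the boundary set of the restricted pair
  have hbres : {p : V × V | IsBdryEdge (restrictBP X R' hsub hfR' τ).R p.1 p.2 ∧ p ≠ ((restrictBP X R' hsub hfR' τ).w, (restrictBP X R' hsub hfR' τ).f) ∧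
      1 ≤ (restrictBP X R' hsub hfR' τ).B p ∧ (restrictBP X R' hsub hfR' τ).B p = ρ p.2}
      = crossSet X.R R' τ ρ ∪ BIn := by
    ext ⟨u, v⟩
    constructor
    · rintro ⟨⟨hu, hv, hadj⟩, hne, hge, heq⟩
      by_cases h : u ∈ X.R
      · have huR : u ∈ X.R \ R' := Finset.mem_sdiff.2 ⟨h, hu⟩
        have hbound := hτ.1 u huR
        have hmin : min (τ u) q = τ u := min_eq_left hbound.2
        simp only [restrictBP, h, if_pos, hmin] at heq
        exact Or.inl ⟨huR, hv, hadj, heq⟩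
      · simp only [restrictBP, h, if_neg, if_false] at hne hge heq
        refine Or.inr ⟨⟨h, hsub hv, hadj⟩, hv, by simpa [restrictBP] using hne, hge, heq⟩
    · rintro (⟨huR, hv, hadj, heq⟩ | ⟨⟨hu, hv, hadj⟩, hv', hne, hge, heq⟩)
      · obtain ⟨huX, hu'⟩ := Finset.mem_sdiff.1 huR
        have hbound := hτ.1 u huR
        have hmin : min (τ u) q = τ u := min_eq_left hbound.2
        refine ⟨⟨hu', hv, hadj⟩, ?_, ?_, ?_⟩
        · intro hc
          have : u = X.w := (Prod.ext_iff.1 hc).1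
          exact X.hw (this ▸ huX)
        · simp only [restrictBP, huX, if_pos, hmin]; exact hbound.1
        · simp only [restrictBP, huX, if_pos, hmin]; exact heq
      · have hu' : u ∉ R' := fun h => hu (hsub h)
        refine ⟨⟨hu', hv', hadj⟩, by simpa [restrictBP] using hne, ?_, ?_⟩
        · simp only [restrictBP, hu, if_neg, if_false]; exact hge
        · simp only [restrictBP, hu, if_neg, if_false]; exact heq
  have hbres_disj : Disjoint (crossSet X.R R' τ ρ) BIn := by
    rw [Set.disjoint_left]
    rintro ⟨u, v⟩ ⟨huR, _, _, _⟩ ⟨⟨hu, _, _⟩, _⟩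
    exact hu (Finset.mem_sdiff.1 huR).1
  -- put it together
  have e1 : monExS X σ = monInt X.R σ + (BOut.ncard + BIn.ncard) := by
    rw [monExS, hbsplit, Set.ncard_union_eq hbdisj hBOutfin hBInfin]
  have e2 : monExS (restrictBP X R' hsub hfR' τ) ρ
      = monInt R' ρ + ((crossSet X.R R' τ ρ).ncard + BIn.ncard) := by
    rw [monExS, hbres, Set.ncard_union_eq hbres_disj hCrossfin hBInfin]
    rfl
  rw [e1, e2, monInt_split X.R R' hsub τ ρ, Kout, ← hBOut]
  omega

end Restrict

section Weights

variable (X : BoundaryPair q) (lam : ℝ)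

lemma ci_eq (i : ℕ) : ci X lam i
    = ∑ σ ∈ (cfin q X.R).filter (fun σ => σ X.f = i), lam ^ monExS X σ :=
  finsum_configs_filter _ _

lemma ci_restrict_eq (R' : Finset V) (hsub : R' ⊆ X.R) (hfR' : X.f ∈ R') (τ : V → ℕ) (i : ℕ) :
    ci (restrictBP X R' hsub hfR' τ) lam i
      = ∑ σ ∈ (cfin q R').filter (fun σ => σ X.f = i),
          lam ^ monExS (restrictBP X R' hsub hfR' τ) σ :=
  ci_eq _ _ _

lemma ci_pos (hlam0 : 0 < lam) {i : ℕ} (hi1 : 1 ≤ i) (hiq : i ≤ q) : 0 < ci X lam i := by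
  rw [ci_eq]
  apply Finset.sum_pos (fun σ _ => pow_pos hlam0 _)
  refine ⟨fun v => if v ∈ X.R then i else 0, ?_⟩
  rw [Finset.mem_filter, mem_cfin]
  refine ⟨⟨fun v hv => by simp [hv, hi1, hiq], fun v hv => by simp [hv]⟩, by simp [X.hf]⟩

lemma ci_nonneg (hlam0 : 0 < lam) (i : ℕ) : 0 ≤ ci X lam i := by
  rw [ci_eq]
  exact Finset.sum_nonneg fun σ _ => pow_nonneg hlam0.le _

lemma cOut_nonneg (hlam0 : 0 < lam) : 0 ≤ cOut X lam :=
  Finset.sum_nonneg fun i _ => ci_nonneg X lam hlam0 i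

lemma restrictBP_B_s (R' : Finset V) (hsub : R' ⊆ X.R) (hfR' : X.f ∈ R') (τ : V → ℕ) :
    (restrictBP X R' hsub hfR' τ).B ((restrictBP X R' hsub hfR' τ).w, (restrictBP X R' hsub hfR' τ).f)
      = X.B (X.w, X.f) := by
  simp [restrictBP, X.hw]

lemma restrictBP_B'_s (R' : Finset V) (hsub : R' ⊆ X.R) (hfR' : X.f ∈ R') (τ : V → ℕ) :
    (restrictBP X R' hsub hfR' τ).B' ((restrictBP X R' hsub hfR' τ).w, (restrictBP X R' hsub hfR' τ).f)
      = X.B' (X.w, X.f) := by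
  simp [restrictBP, X.hw]

lemma ci_decomp (R' : Finset V) (hsub : R' ⊆ X.R) (hfR' : X.f ∈ R') (i : ℕ) :
    ci X lam i = ∑ τ ∈ cfin q (X.R \ R'),
      lam ^ Kout X R' τ * ci (restrictBP X R' hsub hfR' τ) lam i := by
  rw [ci_eq, Finset.sum_filter, sum_configs_split hsub]
  apply Finset.sum_congr rfl
  intro τ hτ
  rw [ci_restrict_eq, Finset.sum_filter, Finset.mul_sum]
  apply Finset.sum_congr rfl
  intro ρ hρ
  have hcf : (combine R' τ ρ) X.f = ρ X.f := by simp [combine, hfR']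
  rw [hcf]
  by_cases h : ρ X.f = i
  · simp only [h, if_pos]
    rw [monExS_restrict X R' hsub hfR' (mem_cfin.1 hτ), pow_add]
  · simp [h]

lemma cOut_restrict (R' : Finset V) (hsub : R' ⊆ X.R) (hfR' : X.f ∈ R') (τ : V → ℕ) :
    cOut (restrictBP X R' hsub hfR' τ) lam
      = ∑ i ∈ (Finset.Icc 1 q).filter
          (fun i => i ≠ X.B (X.w, X.f) ∧ i ≠ X.B' (X.w, X.f)),
          ci (restrictBP X R' hsub hfR' τ) lam i := by
  rw [cOut]
  congr 1
  apply Finset.filter_congr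
  intro i _
  rw [restrictBP_B_s, restrictBP_B'_s]

lemma cOut_decomp (R' : Finset V) (hsub : R' ⊆ X.R) (hfR' : X.f ∈ R') :
    cOut X lam = ∑ τ ∈ cfin q (X.R \ R'),
      lam ^ Kout X R' τ * cOut (restrictBP X R' hsub hfR' τ) lam := by
  rw [cOut]
  have : ∀ i ∈ (Finset.Icc 1 q).filter
      (fun i => i ≠ X.B (X.w, X.f) ∧ i ≠ X.B' (X.w, X.f)),
      ci X lam i = ∑ τ ∈ cfin q (X.R \ R'),
        lam ^ Kout X R' τ * ci (restrictBP X R' hsub hfR' τ) lam i :=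
    fun i _ => ci_decomp X lam R' hsub hfR' i
  rw [Finset.sum_congr rfl this, Finset.sum_comm]
  apply Finset.sum_congr rfl
  intro τ _
  rw [cOut_restrict, Finset.mul_sum]

/-- `monFull` with a boundary condition agreeing with `X.B` off `s` decomposes as
`monExS` plus the indicator of the distinguished edge being monochromatic. -/
lemma monFull_eq (Bc : V × V → ℕ)
    (hoff : ∀ p : V × V, IsBdryEdge X.R p.1 p.2 → p ≠ (X.w, X.f) → Bc p = X.B p)
    (hs1 : 1 ≤ Bc (X.w, X.f)) (σ : V → ℕ) :
    monFull X Bc σ = monExS X σ + (if Bc (X.w, X.f) = σ X.f then 1 else 0) := by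
  classical
  set S : Set (V × V) := {p : V × V | IsBdryEdge X.R p.1 p.2 ∧ p ≠ (X.w, X.f) ∧
    1 ≤ X.B p ∧ X.B p = σ p.2} with hS
  have hSfin : S.Finite := finite_pairs X.R _ (by rintro p ⟨⟨_, h2, h3⟩, _⟩; exact ⟨h2, h3⟩)
  have hwfS : (X.w, X.f) ∉ S := by rintro ⟨_, hne, _⟩; exact hne rfl
  have hT : {p : V × V | IsBdryEdge X.R p.1 p.2 ∧ 1 ≤ Bc p ∧ Bc p = σ p.2}
      = if Bc (X.w, X.f) = σ X.f then insert (X.w, X.f) S else S := by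
    by_cases hc : Bc (X.w, X.f) = σ X.f
    · rw [if_pos hc]
      ext p
      constructor
      · rintro ⟨hbe, hge, heq⟩
        by_cases hp : p = (X.w, X.f)
        · exact Or.inl hp
        · exact Or.inr ⟨hbe, hp, by rwa [← hoff p hbe hp], by rwa [← hoff p hbe hp]⟩
      · rintro (rfl | ⟨hbe, hne, hge, heq⟩)
        · exact ⟨⟨X.hw, X.hf, X.hadj⟩, hs1, hc⟩
        · exact ⟨hbe, by rwa [hoff p hbe hne], by rwa [hoff p hbe hne]⟩
    · rw [if_neg hc]
      ext p
      constructor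
      · rintro ⟨hbe, hge, heq⟩
        have hp : p ≠ (X.w, X.f) := by rintro rfl; exact hc heq
        exact ⟨hbe, hp, by rwa [← hoff p hbe hp], by rwa [← hoff p hbe hp]⟩
      · rintro ⟨hbe, hne, hge, heq⟩
        exact ⟨hbe, by rwa [hoff p hbe hne], by rwa [hoff p hbe hne]⟩
  rw [monFull, monExS, hT]
  by_cases hc : Bc (X.w, X.f) = σ X.f
  · rw [if_pos hc, if_pos hc, Set.ncard_insert_of_notMem hwfS hSfin, ← hS]
    omega
  · rw [if_neg hc, if_neg hc, ← hS]
    omega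

lemma monFull_B_eq (σ : V → ℕ) :
    monFull X X.B σ = monExS X σ + (if X.B (X.w, X.f) = σ X.f then 1 else 0) :=
  monFull_eq X X.B (fun _ _ _ => rfl) X.hBs.1 σ

lemma monFull_B'_eq (σ : V → ℕ) :
    monFull X X.B' σ = monExS X σ + (if X.B' (X.w, X.f) = σ X.f then 1 else 0) :=
  monFull_eq X X.B' (fun p hbe hne => (X.hagree p.1 p.2 hbe hne).symm) X.hB's.1 σ

/-- fiber weights for the two boundary conditions -/
noncomputable def NB (i : ℕ) : ℝ :=
  ∑ σ ∈ (cfin q X.R).filter (fun σ => σ X.f = i), lam ^ monFull X X.B σ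

noncomputable def NB' (i : ℕ) : ℝ :=
  ∑ σ ∈ (cfin q X.R).filter (fun σ => σ X.f = i), lam ^ monFull X X.B' σ

lemma NB_eq (i : ℕ) : NB X lam i = (if X.B (X.w, X.f) = i then lam else 1) * ci X lam i := by
  rw [NB, ci_eq, Finset.mul_sum]
  apply Finset.sum_congr rfl
  intro σ hσ
  rw [Finset.mem_filter] at hσ
  rw [monFull_B_eq, pow_add, hσ.2]
  by_cases h : X.B (X.w, X.f) = i <;> simp [h] <;> ring

lemma NB'_eq (i : ℕ) : NB' X lam i = (if X.B' (X.w, X.f) = i then lam else 1) * ci X lam i := by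
  rw [NB', ci_eq, Finset.mul_sum]
  apply Finset.sum_congr rfl
  intro σ hσ
  rw [Finset.mem_filter] at hσ
  rw [monFull_B'_eq, pow_add, hσ.2]
  by_cases h : X.B' (X.w, X.f) = i <;> simp [h] <;> ring

lemma Zbp_eq (Bc : V × V → ℕ) : Zbp X lam Bc = ∑ σ ∈ cfin q X.R, lam ^ monFull X Bc σ :=
  finsum_configs _

lemma sum_NB : ∑ i ∈ Finset.Icc 1 q, NB X lam i = Zbp X lam X.B := by
  rw [Zbp_eq]
  exact Finset.sum_fiberwise_of_maps_to (fun σ hσ => Finset.mem_Icc.2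
    ((mem_cfin.1 hσ).1 X.f X.hf)) _

lemma sum_NB' : ∑ i ∈ Finset.Icc 1 q, NB' X lam i = Zbp X lam X.B' := by
  rw [Zbp_eq]
  exact Finset.sum_fiberwise_of_maps_to (fun σ hσ => Finset.mem_Icc.2
    ((mem_cfin.1 hσ).1 X.f X.hf)) _

lemma NB_nonneg (hlam0 : 0 < lam) (i : ℕ) : 0 ≤ NB X lam i :=
  Finset.sum_nonneg fun σ _ => pow_nonneg hlam0.le _

lemma NB'_nonneg (hlam0 : 0 < lam) (i : ℕ) : 0 ≤ NB' X lam i :=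
  Finset.sum_nonneg fun σ _ => pow_nonneg hlam0.le _

lemma NB_pos (hlam0 : 0 < lam) {i : ℕ} (hi1 : 1 ≤ i) (hiq : i ≤ q) : 0 < NB X lam i := by
  rw [NB_eq]
  have := ci_pos X lam hlam0 hi1 hiq
  by_cases h : X.B (X.w, X.f) = i <;> simp [h] <;> positivity

lemma NB'_pos (hlam0 : 0 < lam) {i : ℕ} (hi1 : 1 ≤ i) (hiq : i ≤ q) : 0 < NB' X lam i := by
  rw [NB'_eq]
  have := ci_pos X lam hlam0 hi1 hiq
  by_cases h : X.B' (X.w, X.f) = i <;> simp [h] <;> positivity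

lemma Zbp_B_pos (hlam0 : 0 < lam) (hq1 : 1 ≤ q) : 0 < Zbp X lam X.B := by
  rw [← sum_NB]
  have h1 : (1:ℕ) ∈ Finset.Icc 1 q := Finset.mem_Icc.2 ⟨le_refl 1, hq1⟩
  exact Finset.sum_pos' (fun i _ => NB_nonneg X lam hlam0 i)
    ⟨1, h1, NB_pos X lam hlam0 (le_refl 1) hq1⟩

lemma Zbp_B'_pos (hlam0 : 0 < lam) (hq1 : 1 ≤ q) : 0 < Zbp X lam X.B' := by
  rw [← sum_NB']
  have h1 : (1:ℕ) ∈ Finset.Icc 1 q := Finset.mem_Icc.2 ⟨le_refl 1, hq1⟩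
  exact Finset.sum_pos' (fun i _ => NB'_nonneg X lam hlam0 i)
    ⟨1, h1, NB'_pos X lam hlam0 (le_refl 1) hq1⟩

end Weights

section Coupling

open scoped Classical

variable (X : BoundaryPair q) (lam : ℝ)

noncomputable def pB (i : ℕ) : ℝ := NB X lam i / Zbp X lam X.B
noncomputable def pB' (i : ℕ) : ℝ := NB' X lam i / Zbp X lam X.B'
noncomputable def mmin (i : ℕ) : ℝ := min (pB X lam i) (pB' X lam i)
noncomputable def Dtv : ℝ := ∑ i ∈ Finset.Icc 1 q, (pB X lam i - mmin X lam i)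

noncomputable def gB (σ : V → ℕ) : ℝ :=
  if σ ∈ Configs q X.R then lam ^ monFull X X.B σ / NB X lam (σ X.f) else 0

noncomputable def gB' (σ : V → ℕ) : ℝ :=
  if σ ∈ Configs q X.R then lam ^ monFull X X.B' σ / NB' X lam (σ X.f) else 0

noncomputable def kop (i j : ℕ) : ℝ :=
  (if i = j then mmin X lam i else 0) +
  (if Dtv X lam = 0 then 0
    else (pB X lam i - mmin X lam i) * (pB' X lam j - mmin X lam j) / Dtv X lam)

noncomputable def psic (p : (V → ℕ) × (V → ℕ)) : ℝ :=
  kop X lam (p.1 X.f) (p.2 X.f) * gB X lam p.1 * gB' X lam p.2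

variable (hlam0 : 0 < lam) (hq1 : 1 ≤ q)

include hlam0 hq1

lemma pB_nonneg (i : ℕ) : 0 ≤ pB X lam i :=
  div_nonneg (NB_nonneg X lam hlam0 i) (Zbp_B_pos X lam hlam0 hq1).le

lemma pB'_nonneg (i : ℕ) : 0 ≤ pB' X lam i :=
  div_nonneg (NB'_nonneg X lam hlam0 i) (Zbp_B'_pos X lam hlam0 hq1).le

lemma mmin_nonneg (i : ℕ) : 0 ≤ mmin X lam i :=
  le_min (pB_nonneg X lam hlam0 hq1 i) (pB'_nonneg X lam hlam0 hq1 i)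

omit hlam0 hq1 in
lemma sub_mmin_nonneg (i : ℕ) : 0 ≤ pB X lam i - mmin X lam i :=
  sub_nonneg.2 (min_le_left _ _)

omit hlam0 hq1 in
lemma sub_mmin'_nonneg (i : ℕ) : 0 ≤ pB' X lam i - mmin X lam i :=
  sub_nonneg.2 (min_le_right _ _)

omit hlam0 hq1 in
lemma Dtv_nonneg : 0 ≤ Dtv X lam :=
  Finset.sum_nonneg fun i _ => sub_mmin_nonneg X lam i

lemma sum_pB : ∑ i ∈ Finset.Icc 1 q, pB X lam i = 1 := by
  simp only [pB]
  rw [← Finset.sum_div, sum_NB, div_self (Zbp_B_pos X lam hlam0 hq1).ne']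

lemma sum_pB' : ∑ i ∈ Finset.Icc 1 q, pB' X lam i = 1 := by
  simp only [pB']
  rw [← Finset.sum_div, sum_NB', div_self (Zbp_B'_pos X lam hlam0 hq1).ne']

lemma Dtv_eq' : ∑ i ∈ Finset.Icc 1 q, (pB' X lam i - mmin X lam i) = Dtv X lam := by
  rw [Dtv, Finset.sum_sub_distrib, Finset.sum_sub_distrib,
    sum_pB X lam hlam0 hq1, sum_pB' X lam hlam0 hq1]

lemma kop_nonneg (i j : ℕ) : 0 ≤ kop X lam i j := by
  rw [kop]
  apply add_nonneg
  · by_cases h : i = j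
    · simpa [h] using mmin_nonneg X lam hlam0 hq1 j
    · simp [h]
  · by_cases hD : Dtv X lam = 0
    · simp [hD]
    · have hDpos : 0 < Dtv X lam := lt_of_le_of_ne (Dtv_nonneg X lam) (Ne.symm hD)
      rw [if_neg hD]
      exact div_nonneg (mul_nonneg (sub_mmin_nonneg X lam i)
        (sub_mmin'_nonneg X lam j)) hDpos.le

lemma kop_row {i : ℕ} (hi : i ∈ Finset.Icc 1 q) :
    ∑ j ∈ Finset.Icc 1 q, kop X lam i j = pB X lam i := by
  simp only [kop]
  rw [Finset.sum_add_distrib, Finset.sum_ite_eq, if_pos hi]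
  by_cases hD : Dtv X lam = 0
  · have hall : ∀ k ∈ Finset.Icc 1 q, pB X lam k - mmin X lam k = 0 := by
      intro k hk
      have := (Finset.sum_eq_zero_iff_of_nonneg
        (fun k _ => sub_mmin_nonneg X lam k)).1 hD k hk
      exact this
    have hmi : mmin X lam i = pB X lam i := by have := hall i hi; linarith
    simp [hD, hmi]
  · simp only [if_neg hD]
    rw [← Finset.sum_div, ← Finset.mul_sum, Dtv_eq' X lam hlam0 hq1,
      mul_div_assoc, div_self hD, mul_one]
    ring


lemma kop_col {j : ℕ} (hj : j ∈ Finset.Icc 1 q) :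
    ∑ i ∈ Finset.Icc 1 q, kop X lam i j = pB' X lam j := by
  simp only [kop]
  rw [Finset.sum_add_distrib, Finset.sum_ite_eq', if_pos hj]
  by_cases hD : Dtv X lam = 0
  · have hall : ∀ k ∈ Finset.Icc 1 q, pB X lam k - mmin X lam k = 0 := by
      intro k hk
      exact (Finset.sum_eq_zero_iff_of_nonneg
        (fun k _ => sub_mmin_nonneg X lam k)).1 hD k hk
    have hall' : ∀ k ∈ Finset.Icc 1 q, pB' X lam k - mmin X lam k = 0 := by
      intro k hk
      refine (Finset.sum_eq_zero_iff_of_nonneg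
        (fun k _ => sub_mmin'_nonneg X lam k)).1 ?_ k hk
      rw [Dtv_eq' X lam hlam0 hq1]; exact hD
    have hmj : mmin X lam j = pB' X lam j := by have := hall' j hj; linarith
    simp [hD, hmj]
  · simp only [if_neg hD]
    have : ∀ k ∈ Finset.Icc 1 q,
        (pB X lam k - mmin X lam k) * (pB' X lam j - mmin X lam j) / Dtv X lam
        = (pB' X lam j - mmin X lam j) * (pB X lam k - mmin X lam k) / Dtv X lam := by
      intro k _; ring
    rw [Finset.sum_congr rfl this, ← Finset.sum_div, ← Finset.mul_sum, ← Dtv,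
      mul_div_assoc, div_self hD, mul_one]
    ring

omit hlam0 hq1 in
lemma gB_nonneg (hl : 0 ≤ lam) (σ : V → ℕ) : 0 ≤ gB X lam σ := by
  rw [gB]
  split
  · apply div_nonneg (pow_nonneg hl _)
    exact Finset.sum_nonneg fun σ _ => pow_nonneg hl _
  · exact le_refl 0

omit hlam0 hq1 in
lemma gB'_nonneg (hl : 0 ≤ lam) (σ : V → ℕ) : 0 ≤ gB' X lam σ := by
  rw [gB']
  split
  · apply div_nonneg (pow_nonneg hl _)
    exact Finset.sum_nonneg fun σ _ => pow_nonneg hl _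
  · exact le_refl 0

omit hq1 in
lemma gB_fiber {i : ℕ} (hi1 : 1 ≤ i) (hiq : i ≤ q) :
    ∑ σ ∈ (cfin q X.R).filter (fun σ => σ X.f = i), gB X lam σ = 1 := by
  have : ∀ σ ∈ (cfin q X.R).filter (fun σ => σ X.f = i),
      gB X lam σ = lam ^ monFull X X.B σ / NB X lam i := by
    intro σ hσ
    rw [Finset.mem_filter] at hσ
    rw [gB, if_pos (mem_cfin.1 hσ.1), hσ.2]
  rw [Finset.sum_congr rfl this, ← Finset.sum_div, ← NB,
    div_self (NB_pos X lam hlam0 hi1 hiq).ne']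

omit hq1 in
lemma gB'_fiber {i : ℕ} (hi1 : 1 ≤ i) (hiq : i ≤ q) :
    ∑ σ ∈ (cfin q X.R).filter (fun σ => σ X.f = i), gB' X lam σ = 1 := by
  have : ∀ σ ∈ (cfin q X.R).filter (fun σ => σ X.f = i),
      gB' X lam σ = lam ^ monFull X X.B' σ / NB' X lam i := by
    intro σ hσ
    rw [Finset.mem_filter] at hσ
    rw [gB', if_pos (mem_cfin.1 hσ.1), hσ.2]
  rw [Finset.sum_congr rfl this, ← Finset.sum_div, ← NB',
    div_self (NB'_pos X lam hlam0 hi1 hiq).ne']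

lemma psic_coupling : IsCoupling X lam (psic X lam) := by
  refine ⟨?_, ?_, ?_, ?_⟩
  · intro p
    exact mul_nonneg (mul_nonneg (kop_nonneg X lam hlam0 hq1 _ _)
      (gB_nonneg X lam hlam0.le p.1)) (gB'_nonneg X lam hlam0.le p.2)
  · rintro p (h | h)
    · rw [psic, gB, if_neg h]; ring
    · rw [psic, gB', if_neg h]; ring
  · intro σ hσ
    have hfmem : σ X.f ∈ Finset.Icc 1 q := Finset.mem_Icc.2 (hσ.1 X.f X.hf)
    rw [finsum_configs (fun σ' => psic X lam (σ, σ'))]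
    have step : ∑ σ' ∈ cfin q X.R, psic X lam (σ, σ')
        = ∑ j ∈ Finset.Icc 1 q, ∑ σ' ∈ (cfin q X.R).filter (fun σ' => σ' X.f = j),
            psic X lam (σ, σ') :=
      (Finset.sum_fiberwise_of_maps_to (fun σ' hσ' => Finset.mem_Icc.2
        ((mem_cfin.1 hσ').1 X.f X.hf)) _).symm
    rw [step]
    have inner : ∀ j ∈ Finset.Icc 1 q,
        ∑ σ' ∈ (cfin q X.R).filter (fun σ' => σ' X.f = j), psic X lam (σ, σ')
          = kop X lam (σ X.f) j * gB X lam σ := by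
      intro j hj
      have : ∀ σ' ∈ (cfin q X.R).filter (fun σ' => σ' X.f = j),
          psic X lam (σ, σ') = kop X lam (σ X.f) j * gB X lam σ * gB' X lam σ' := by
        intro σ' hσ'
        rw [Finset.mem_filter] at hσ'
        rw [psic]
        simp only []
        rw [hσ'.2]
      rw [Finset.sum_congr rfl this, ← Finset.mul_sum,
        gB'_fiber X lam hlam0 (Finset.mem_Icc.1 hj).1 (Finset.mem_Icc.1 hj).2, mul_one]
    rw [Finset.sum_congr rfl inner, ← Finset.sum_mul, kop_row X lam hlam0 hq1 hfmem]
    rw [gibbsbp, gB, if_pos hσ, pB]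
    rw [div_mul_div_comm]
    rw [div_eq_div_iff]
    · ring
    · exact (mul_pos (Zbp_B_pos X lam hlam0 hq1)
        (NB_pos X lam hlam0 (hσ.1 X.f X.hf).1 (hσ.1 X.f X.hf).2)).ne'
    · exact (Zbp_B_pos X lam hlam0 hq1).ne'
  · intro σ' hσ'
    have hfmem : σ' X.f ∈ Finset.Icc 1 q := Finset.mem_Icc.2 (hσ'.1 X.f X.hf)
    rw [finsum_configs (fun σ => psic X lam (σ, σ'))]
    have step : ∑ σ ∈ cfin q X.R, psic X lam (σ, σ')
        = ∑ i ∈ Finset.Icc 1 q, ∑ σ ∈ (cfin q X.R).filter (fun σ => σ X.f = i),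
            psic X lam (σ, σ') :=
      (Finset.sum_fiberwise_of_maps_to (fun σ hσ => Finset.mem_Icc.2
        ((mem_cfin.1 hσ).1 X.f X.hf)) _).symm
    rw [step]
    have inner : ∀ i ∈ Finset.Icc 1 q,
        ∑ σ ∈ (cfin q X.R).filter (fun σ => σ X.f = i), psic X lam (σ, σ')
          = kop X lam i (σ' X.f) * gB' X lam σ' := by
      intro i hi
      have : ∀ σ ∈ (cfin q X.R).filter (fun σ => σ X.f = i),
          psic X lam (σ, σ') = kop X lam i (σ' X.f) * gB' X lam σ' * gB X lam σ := by
        intro σ hσ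
        rw [Finset.mem_filter] at hσ
        rw [psic]
        simp only []
        rw [hσ.2]
        ring
      rw [Finset.sum_congr rfl this, ← Finset.mul_sum,
        gB_fiber X lam hlam0 (Finset.mem_Icc.1 hi).1 (Finset.mem_Icc.1 hi).2, mul_one]
    rw [Finset.sum_congr rfl inner, ← Finset.sum_mul, kop_col X lam hlam0 hq1 hfmem]
    rw [gibbsbp, gB', if_pos hσ', pB']
    rw [div_mul_div_comm]
    rw [div_eq_div_iff]
    · ring
    · exact (mul_pos (Zbp_B'_pos X lam hlam0 hq1)
        (NB'_pos X lam hlam0 (hσ'.1 X.f X.hf).1 (hσ'.1 X.f X.hf).2)).ne'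
    · exact (Zbp_B'_pos X lam hlam0 hq1).ne'

lemma disagree_psic : disagree X (psic X lam) = Dtv X lam := by
  classical
  -- convert the finsum to a finite sum over pairs of configurations
  have hsupp : disagree X (psic X lam)
      = ∑ p ∈ ((cfin q X.R) ×ˢ (cfin q X.R)).filter (fun p => p.1 X.f ≠ p.2 X.f),
          psic X lam p := by
    rw [disagree]
    apply finsum_mem_eq_sum_of_inter_support_eq
    ext p
    simp only [Set.mem_inter_iff, Set.mem_setOf_eq, Function.mem_support, Finset.coe_filter,
      Finset.mem_product]
    constructor
    · rintro ⟨hne, hsup⟩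
      refine ⟨⟨?_, hne⟩, hsup⟩
      by_contra hc
      rw [not_and_or] at hc
      apply hsup
      rcases hc with hc | hc
      · rw [psic, gB, if_neg (fun h => hc (mem_cfin.2 h))]; ring
      · rw [psic, gB', if_neg (fun h => hc (mem_cfin.2 h))]; ring
    · rintro ⟨⟨_, hne⟩, hsup⟩
      exact ⟨hne, hsup⟩
  rw [hsupp, Finset.sum_filter, Finset.sum_product]
  have outer : ∀ σ ∈ cfin q X.R,
      (∑ σ' ∈ cfin q X.R, if σ X.f ≠ σ' X.f then psic X lam (σ, σ') else 0)
        = ∑ j ∈ Finset.Icc 1 q,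
            (if σ X.f ≠ j then kop X lam (σ X.f) j else 0) * gB X lam σ := by
    intro σ hσ
    rw [← Finset.sum_fiberwise_of_maps_to (fun σ' hσ' => Finset.mem_Icc.2
        ((mem_cfin.1 hσ').1 X.f X.hf)) (fun σ' => if σ X.f ≠ σ' X.f then psic X lam (σ, σ') else 0)]
    apply Finset.sum_congr rfl
    intro j hj
    have : ∀ σ' ∈ (cfin q X.R).filter (fun σ' => σ' X.f = j),
        (if σ X.f ≠ σ' X.f then psic X lam (σ, σ') else 0)
          = (if σ X.f ≠ j then kop X lam (σ X.f) j else 0) * gB X lam σ * gB' X lam σ' := by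
      intro σ' hσ'
      rw [Finset.mem_filter] at hσ'
      rw [psic]
      simp only []
      rw [hσ'.2]
      by_cases hne : σ X.f ≠ j
      · rw [if_pos hne, if_pos hne]
      · rw [if_neg hne, if_neg hne]; ring
    rw [Finset.sum_congr rfl this, ← Finset.mul_sum,
      gB'_fiber X lam hlam0 (Finset.mem_Icc.1 hj).1 (Finset.mem_Icc.1 hj).2, mul_one]
  rw [Finset.sum_congr rfl outer]
  rw [← Finset.sum_comm]
  -- now sum over σ for each j, then over i
  have outer2 : ∀ j ∈ Finset.Icc 1 q,
      (∑ σ ∈ cfin q X.R, (if σ X.f ≠ j then kop X lam (σ X.f) j else 0) * gB X lam σ)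
        = ∑ i ∈ Finset.Icc 1 q, (if i ≠ j then kop X lam i j else 0) := by
    intro j hj
    rw [← Finset.sum_fiberwise_of_maps_to (fun σ hσ => Finset.mem_Icc.2
        ((mem_cfin.1 hσ).1 X.f X.hf))
        (fun σ => (if σ X.f ≠ j then kop X lam (σ X.f) j else 0) * gB X lam σ)]
    apply Finset.sum_congr rfl
    intro i hi
    have : ∀ σ ∈ (cfin q X.R).filter (fun σ => σ X.f = i),
        (if σ X.f ≠ j then kop X lam (σ X.f) j else 0) * gB X lam σ
          = (if i ≠ j then kop X lam i j else 0) * gB X lam σ := by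
      intro σ hσ
      rw [Finset.mem_filter] at hσ
      rw [hσ.2]
    rw [Finset.sum_congr rfl this, ← Finset.mul_sum,
      gB_fiber X lam hlam0 (Finset.mem_Icc.1 hi).1 (Finset.mem_Icc.1 hi).2, mul_one]
  rw [Finset.sum_congr rfl outer2]
  -- finally evaluate the double sum over spins
  by_cases hD : Dtv X lam = 0
  · have hz : ∀ j ∈ Finset.Icc 1 q, ∀ i ∈ Finset.Icc 1 q,
        (if i ≠ j then kop X lam i j else 0) = 0 := by
      intro j _ i _
      by_cases hne : i ≠ j
      · rw [if_pos hne, kop, if_neg hne, if_pos hD]; ring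
      · rw [if_neg hne]
    calc ∑ j ∈ Finset.Icc 1 q, ∑ i ∈ Finset.Icc 1 q, (if i ≠ j then kop X lam i j else 0)
        = ∑ j ∈ Finset.Icc 1 q, ∑ i ∈ Finset.Icc 1 q, (0:ℝ) := by
          apply Finset.sum_congr rfl
          intro j hj
          exact Finset.sum_congr rfl (hz j hj)
      _ = 0 := by simp
      _ = Dtv X lam := hD.symm
  · have hdiag : ∀ i, (pB X lam i - mmin X lam i) * (pB' X lam i - mmin X lam i) = 0 := by
      intro i
      rcases le_total (pB X lam i) (pB' X lam i) with h | h
      · have : mmin X lam i = pB X lam i := min_eq_left h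
        rw [this]; ring
      · have : mmin X lam i = pB' X lam i := min_eq_right h
        rw [this]; ring
    have hterm : ∀ j ∈ Finset.Icc 1 q, ∀ i ∈ Finset.Icc 1 q,
        (if i ≠ j then kop X lam i j else 0)
          = (pB X lam i - mmin X lam i) * (pB' X lam j - mmin X lam j) / Dtv X lam
            - (if i = j then (pB X lam i - mmin X lam i) * (pB' X lam j - mmin X lam j) / Dtv X lam else 0) := by
      intro j _ i _
      by_cases hne : i = j
      · rw [if_neg (fun h => h hne), if_pos hne]; ring
      · rw [if_pos hne, if_neg hne, kop, if_neg (fun h => hne h), if_neg hD]; ring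
    have step : ∀ j ∈ Finset.Icc 1 q,
        ∑ i ∈ Finset.Icc 1 q, (if i ≠ j then kop X lam i j else 0)
          = (pB' X lam j - mmin X lam j)
            - (pB X lam j - mmin X lam j) * (pB' X lam j - mmin X lam j) / Dtv X lam := by
      intro j hj
      rw [Finset.sum_congr rfl (hterm j hj), Finset.sum_sub_distrib]
      congr 1
      · have : ∀ i ∈ Finset.Icc 1 q,
            (pB X lam i - mmin X lam i) * (pB' X lam j - mmin X lam j) / Dtv X lam
            = (pB' X lam j - mmin X lam j) / Dtv X lam * (pB X lam i - mmin X lam i) := by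
          intro i _; ring
        rw [Finset.sum_congr rfl this, ← Finset.mul_sum, ← Dtv]
        field_simp
      · rw [Finset.sum_ite_eq', if_pos hj]
    rw [Finset.sum_congr rfl step, Finset.sum_sub_distrib, Dtv_eq' X lam hlam0 hq1]
    have : ∀ j ∈ Finset.Icc 1 q,
        (pB X lam j - mmin X lam j) * (pB' X lam j - mmin X lam j) / Dtv X lam = 0 := by
      intro j _
      rw [hdiag j]; ring
    rw [Finset.sum_congr rfl this]
    simp

end Coupling




section Algebra

lemma Dbound (lam x y z : ℝ) (h0 : 0 < lam) (h1 : lam ≤ 1) (hx : 0 < x) (hy : 0 < y)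
    (hz : 0 ≤ z) :
    1 - lam*x/(lam*x+y+z) - lam*y/(x+lam*y+z) - z/(x+lam*y+z)
      ≤ (1-lam)*x/((1+lam)*x+z) := by
  have hZ : 0 < lam*x+y+z := by nlinarith
  have hZ' : 0 < x+lam*y+z := by nlinarith
  have hden : 0 < (1+lam)*x+z := by nlinarith
  have key : ((1+lam)*y+z)*((1+lam)*x+z) ≤ (lam*x+y+z)*(x+lam*y+z) := by
    nlinarith [sq_nonneg (x-y)]
  have hL : 1 - lam*x/(lam*x+y+z) - lam*y/(x+lam*y+z) - z/(x+lam*y+z)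
      = (1-lam)*x*((1+lam)*y+z)/((lam*x+y+z)*(x+lam*y+z)) := by
    field_simp
    ring
  rw [hL, div_le_div_iff₀ (by positivity) hden]
  calc (1-lam)*x*((1+lam)*y+z)*((1+lam)*x+z)
      = (1-lam)*x*(((1+lam)*y+z)*((1+lam)*x+z)) := by ring
    _ ≤ (1-lam)*x*((lam*x+y+z)*(x+lam*y+z)) := by
        apply mul_le_mul_of_nonneg_left key (by nlinarith)

lemma Icc_split {b b' : ℕ} (hb : b ∈ Finset.Icc 1 q) (hb' : b' ∈ Finset.Icc 1 q)
    (hne : b ≠ b') (F : ℕ → ℝ) :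
    ∑ i ∈ Finset.Icc 1 q, F i
      = F b + F b' + ∑ i ∈ (Finset.Icc 1 q).filter (fun i => i ≠ b ∧ i ≠ b'), F i := by
  classical
  have h1 : ((Finset.Icc 1 q).filter (fun i => ¬ i = b)).filter (fun i => i = b') = {b'} := by
    rw [Finset.filter_filter]
    ext i
    simp only [Finset.mem_filter, Finset.mem_singleton]
    constructor
    · rintro ⟨_, _, h⟩; exact h
    · rintro rfl; exact ⟨hb', fun h => hne h.symm, rfl⟩
  have h2 : ((Finset.Icc 1 q).filter (fun i => ¬ i = b)).filter (fun i => ¬ i = b')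
      = (Finset.Icc 1 q).filter (fun i => i ≠ b ∧ i ≠ b') := by
    rw [Finset.filter_filter]
  rw [← Finset.sum_filter_add_sum_filter_not (Finset.Icc 1 q) (fun i => i = b) F,
    ← Finset.sum_filter_add_sum_filter_not ((Finset.Icc 1 q).filter (fun i => ¬ i = b))
      (fun i => i = b') F,
    Finset.filter_eq', if_pos hb, Finset.sum_singleton, h1, Finset.sum_singleton, h2]
  ring

end Algebra

section DtvBound

open scoped Classical

variable (X : BoundaryPair q) (lam : ℝ)

lemma term_nonneg (hlam0 : 0 < lam) (hlam1 : lam ≤ 1) (i : ℕ) :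
    0 ≤ (1-lam) * ci X lam i / ((1+lam) * ci X lam i + cOut X lam) := by
  apply div_nonneg
  · exact mul_nonneg (by linarith) (ci_nonneg X lam hlam0 i)
  · have := ci_nonneg X lam hlam0 i
    have := cOut_nonneg X lam hlam0
    nlinarith

lemma mu_nonneg (hlam0 : 0 < lam) (hlam1 : lam ≤ 1) : 0 ≤ mu X lam :=
  le_trans (term_nonneg X lam hlam0 hlam1 _) (le_max_left _ _)

lemma Dtv_le_mu (hlam0 : 0 < lam) (hlam1 : lam ≤ 1) : Dtv X lam ≤ mu X lam := by
  have hq1 : 1 ≤ q := le_trans X.hBs.1 X.hBs.2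
  set b := X.B (X.w, X.f) with hbdef
  set b' := X.B' (X.w, X.f) with hb'def
  have hb : b ∈ Finset.Icc 1 q := Finset.mem_Icc.2 X.hBs
  have hb'm : b' ∈ Finset.Icc 1 q := Finset.mem_Icc.2 X.hB's
  by_cases hbb : b = b'
  · -- identical boundary conditions: Dtv = 0
    have hNN : ∀ i, NB X lam i = NB' X lam i := by
      intro i
      rw [NB_eq, NB'_eq, ← hbdef, ← hb'def, ← hbb]
    have hZZ : Zbp X lam X.B = Zbp X lam X.B' := by
      rw [← sum_NB, ← sum_NB']
      exact Finset.sum_congr rfl fun i _ => hNN i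
    have hpp : ∀ i, pB X lam i = pB' X lam i := by
      intro i
      rw [pB, pB', hNN, hZZ]
    have hD0 : Dtv X lam = 0 := by
      rw [Dtv]
      apply Finset.sum_eq_zero
      intro i _
      rw [mmin, hpp, min_self]
      ring
    rw [hD0]
    exact mu_nonneg X lam hlam0 hlam1
  · set x := ci X lam b with hxdef
    set y := ci X lam b' with hydef
    set z := cOut X lam with hzdef
    have hx : 0 < x := ci_pos X lam hlam0 X.hBs.1 X.hBs.2
    have hy : 0 < y := ci_pos X lam hlam0 X.hB's.1 X.hB's.2
    have hz : 0 ≤ z := cOut_nonneg X lam hlam0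
    have hZval : Zbp X lam X.B = lam*x+y+z := by
      rw [← sum_NB, Icc_split hb hb'm hbb]
      rw [NB_eq, NB_eq, if_pos rfl, if_neg (fun h => hbb h)]
      have : ∀ i ∈ (Finset.Icc 1 q).filter (fun i => i ≠ b ∧ i ≠ b'),
          NB X lam i = ci X lam i := by
        intro i hi
        rw [Finset.mem_filter] at hi
        rw [NB_eq, if_neg (fun h => hi.2.1 h.symm), one_mul]
      rw [Finset.sum_congr rfl this]
      rw [cOut] at hzdef
      rw [hzdef]
      ring
    have hZ'val : Zbp X lam X.B' = x+lam*y+z := by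
      rw [← sum_NB', Icc_split hb hb'm hbb]
      rw [NB'_eq, NB'_eq, if_pos rfl, if_neg (fun h => hbb h.symm)]
      have : ∀ i ∈ (Finset.Icc 1 q).filter (fun i => i ≠ b ∧ i ≠ b'),
          NB' X lam i = ci X lam i := by
        intro i hi
        rw [Finset.mem_filter] at hi
        rw [NB'_eq, if_neg (fun h => hi.2.2 h.symm), one_mul]
      rw [Finset.sum_congr rfl this]
      rw [cOut] at hzdef
      rw [hzdef]
      ring
    have hZpos : (0:ℝ) < lam*x+y+z := by nlinarith
    have hZ'pos : (0:ℝ) < x+lam*y+z := by nlinarith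
    -- explicit fiber probabilities
    have hpBb : pB X lam b = lam*x/(lam*x+y+z) := by
      rw [pB, NB_eq, if_pos rfl, hZval]
    have hpBb' : pB X lam b' = y/(lam*x+y+z) := by
      rw [pB, NB_eq, if_neg (fun h => hbb h), hZval, one_mul]
    have hpB'b : pB' X lam b = x/(x+lam*y+z) := by
      rw [pB', NB'_eq, if_neg (fun h => hbb h.symm), hZ'val, one_mul]
    have hpB'b' : pB' X lam b' = lam*y/(x+lam*y+z) := by
      rw [pB', NB'_eq, if_pos rfl, hZ'val]
    have hpBi : ∀ i, i ≠ b → pB X lam i = ci X lam i/(lam*x+y+z) := by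
      intro i hi
      rw [pB, NB_eq, if_neg (fun h => hi h.symm), hZval, one_mul]
    have hpB'i : ∀ i, i ≠ b' → pB' X lam i = ci X lam i/(x+lam*y+z) := by
      intro i hi
      rw [pB', NB'_eq, if_neg (fun h => hi h.symm), hZ'val, one_mul]
    -- minima at b and b'
    have hmb : mmin X lam b = lam*x/(lam*x+y+z) := by
      rw [mmin, hpBb, hpB'b]
      apply min_eq_left
      rw [div_le_div_iff₀ hZpos hZ'pos]
      have hl2 : lam^2 ≤ 1 := by nlinarith
      nlinarith [mul_pos hx hy, mul_nonneg hx.le hz, hl2]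
    have hmb' : mmin X lam b' = lam*y/(x+lam*y+z) := by
      rw [mmin, hpBb', hpB'b']
      apply min_eq_right
      rw [div_le_div_iff₀ hZ'pos hZpos]
      have hl2 : lam^2 ≤ 1 := by nlinarith
      nlinarith [mul_pos hx hy, mul_nonneg hy.le hz, hl2]
    have hDtv : Dtv X lam = 1 - (mmin X lam b + mmin X lam b'
        + ∑ i ∈ (Finset.Icc 1 q).filter (fun i => i ≠ b ∧ i ≠ b'), mmin X lam i) := by
      rw [Dtv, Finset.sum_sub_distrib, sum_pB X lam hlam0 hq1,
        Icc_split hb hb'm hbb (fun i => mmin X lam i)]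
    rcases le_total y x with hyx | hxy
    · -- bound by the `b` term
      have hZle : lam*x+y+z ≤ x+lam*y+z := by nlinarith
      have hmi : ∀ i ∈ (Finset.Icc 1 q).filter (fun i => i ≠ b ∧ i ≠ b'),
          mmin X lam i = ci X lam i/(x+lam*y+z) := by
        intro i hi
        rw [Finset.mem_filter] at hi
        rw [mmin, hpBi i hi.2.1, hpB'i i hi.2.2]
        exact min_eq_right (div_le_div_of_nonneg_left (ci_nonneg X lam hlam0 i) hZpos hZle)
      have hsum : ∑ i ∈ (Finset.Icc 1 q).filter (fun i => i ≠ b ∧ i ≠ b'), mmin X lam i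
          = z/(x+lam*y+z) := by
        rw [Finset.sum_congr rfl hmi, ← Finset.sum_div]
        rw [cOut] at hzdef
        rw [← hzdef]
      have hfin : Dtv X lam = 1 - lam*x/(lam*x+y+z) - lam*y/(x+lam*y+z) - z/(x+lam*y+z) := by
        rw [hDtv, hmb, hmb', hsum]; ring
      have := Dbound lam x y z hlam0 hlam1 hx hy hz
      refine le_trans ?_ (le_max_left _ _)
      rw [hfin]
      exact this
    · -- bound by the `b'` term
      have hZle : x+lam*y+z ≤ lam*x+y+z := by nlinarith
      have hmi : ∀ i ∈ (Finset.Icc 1 q).filter (fun i => i ≠ b ∧ i ≠ b'),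
          mmin X lam i = ci X lam i/(lam*x+y+z) := by
        intro i hi
        rw [Finset.mem_filter] at hi
        rw [mmin, hpBi i hi.2.1, hpB'i i hi.2.2]
        exact min_eq_left (div_le_div_of_nonneg_left (ci_nonneg X lam hlam0 i) hZ'pos hZle)
      have hsum : ∑ i ∈ (Finset.Icc 1 q).filter (fun i => i ≠ b ∧ i ≠ b'), mmin X lam i
          = z/(lam*x+y+z) := by
        rw [Finset.sum_congr rfl hmi, ← Finset.sum_div]
        rw [cOut] at hzdef
        rw [← hzdef]
      have hfin : Dtv X lam = 1 - lam*x/(lam*x+y+z) - lam*y/(x+lam*y+z) - z/(lam*x+y+z) := by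
        rw [hDtv, hmb, hmb', hsum]; ring
      have hDb := Dbound lam y x z hlam0 hlam1 hy hx hz
      rw [show lam*y+x+z = x+lam*y+z from by ring, show y+lam*x+z = lam*x+y+z from by ring] at hDb
      refine le_trans ?_ (le_max_right _ _)
      have hzeq : cOut X lam = z := rfl
      rw [hfin]
      rw [show (1-lam) * ci X lam (X.B' (X.w, X.f)) / ((1+lam) * ci X lam (X.B' (X.w, X.f)) + cOut X lam) = (1-lam)*y/((1+lam)*y+z) from rfl]
      linarith [hDb]
  
end DtvBound


section Final

lemma restrictBP_B_agree (X : BoundaryPair q) (R' : Finset V) (hsub : R' ⊆ X.R)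
    (hfR' : X.f ∈ R') (τ : V → ℕ) :
    ∀ u v, IsBdryEdge X.R u v → v ∈ R' →
      (restrictBP X R' hsub hfR' τ).B (u, v) = X.B (u, v) := by
  intro u v hbe _
  simp [restrictBP, hbe.1]

lemma restrictBP_B'_agree (X : BoundaryPair q) (R' : Finset V) (hsub : R' ⊆ X.R)
    (hfR' : X.f ∈ R') (τ : V → ℕ) :
    ∀ u v, IsBdryEdge X.R u v → v ∈ R' →
      (restrictBP X R' hsub hfR' τ).B' (u, v) = X.B' (u, v) := by
  intro u v hbe _
  simp [restrictBP, hbe.1]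

/-- Aggregation: if `m` dominates `μ` of every restriction of `X` to `R'`, it dominates
`μ(X)` itself. -/
lemma mu_le_of_restrict (X : BoundaryPair q) (lam : ℝ) (hlam0 : 0 < lam) (hlam1 : lam ≤ 1)
    (R' : Finset V) (hsub : R' ⊆ X.R) (hfR' : X.f ∈ R') (m : ℝ)
    (hres : ∀ τ ∈ cfin q (X.R \ R'), mu (restrictBP X R' hsub hfR' τ) lam ≤ m) :
    mu X lam ≤ m := by
  have key : ∀ b : ℕ, 1 ≤ b → b ≤ q →
      (∀ τ ∈ cfin q (X.R \ R'),
        (1 - lam) * ci (restrictBP X R' hsub hfR' τ) lam b /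
          ((1 + lam) * ci (restrictBP X R' hsub hfR' τ) lam b
            + cOut (restrictBP X R' hsub hfR' τ) lam) ≤ m) →
      (1 - lam) * ci X lam b / ((1 + lam) * ci X lam b + cOut X lam) ≤ m := by
    intro b hb1 hbq hterm
    have hxpos : 0 < ci X lam b := ci_pos X lam hlam0 hb1 hbq
    have hzpos : 0 ≤ cOut X lam := cOut_nonneg X lam hlam0
    have hden : 0 < (1 + lam) * ci X lam b + cOut X lam := by nlinarith
    rw [div_le_iff₀ hden]
    have hsummand : ∀ τ ∈ cfin q (X.R \ R'),
        lam ^ Kout X R' τ * ((1 - lam) * ci (restrictBP X R' hsub hfR' τ) lam b)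
          ≤ lam ^ Kout X R' τ * (m * ((1 + lam) * ci (restrictBP X R' hsub hfR' τ) lam b
              + cOut (restrictBP X R' hsub hfR' τ) lam)) := by
      intro τ hτ
      apply mul_le_mul_of_nonneg_left _ (pow_nonneg hlam0.le _)
      have hxτ : 0 < ci (restrictBP X R' hsub hfR' τ) lam b :=
        ci_pos (restrictBP X R' hsub hfR' τ) lam hlam0 hb1 hbq
      have hzτ : 0 ≤ cOut (restrictBP X R' hsub hfR' τ) lam :=
        cOut_nonneg (restrictBP X R' hsub hfR' τ) lam hlam0
      have hdτ : 0 < (1 + lam) * ci (restrictBP X R' hsub hfR' τ) lam b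
          + cOut (restrictBP X R' hsub hfR' τ) lam := by nlinarith
      have := hterm τ hτ
      rw [div_le_iff₀ hdτ] at this
      linarith
    have hsum := Finset.sum_le_sum hsummand
    have hL : ∑ τ ∈ cfin q (X.R \ R'),
        lam ^ Kout X R' τ * ((1 - lam) * ci (restrictBP X R' hsub hfR' τ) lam b)
        = (1 - lam) * ci X lam b := by
      rw [ci_decomp X lam R' hsub hfR' b, Finset.mul_sum]
      apply Finset.sum_congr rfl
      intros; ring
    have hR : ∑ τ ∈ cfin q (X.R \ R'),
        lam ^ Kout X R' τ * (m * ((1 + lam) * ci (restrictBP X R' hsub hfR' τ) lam b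
          + cOut (restrictBP X R' hsub hfR' τ) lam))
        = m * ((1 + lam) * ci X lam b + cOut X lam) := by
      calc ∑ τ ∈ cfin q (X.R \ R'),
            lam ^ Kout X R' τ * (m * ((1 + lam) * ci (restrictBP X R' hsub hfR' τ) lam b
              + cOut (restrictBP X R' hsub hfR' τ) lam))
          = m * ∑ τ ∈ cfin q (X.R \ R'),
              ((1 + lam) * (lam ^ Kout X R' τ * ci (restrictBP X R' hsub hfR' τ) lam b)
                + lam ^ Kout X R' τ * cOut (restrictBP X R' hsub hfR' τ) lam) := by
            rw [Finset.mul_sum]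
            apply Finset.sum_congr rfl
            intros; ring
        _ = m * ((1 + lam) * ci X lam b + cOut X lam) := by
            rw [Finset.sum_add_distrib, ← Finset.mul_sum,
              ← ci_decomp X lam R' hsub hfR' b, ← cOut_decomp X lam R' hsub hfR']
    rw [hL, hR] at hsum
    exact hsum
  rw [mu]
  apply max_le
  · apply key _ X.hBs.1 X.hBs.2
    intro τ hτ
    have h := le_trans (le_max_left _ _) (hres τ hτ)
    rwa [restrictBP_B_s] at h
  · apply key _ X.hB's.1 X.hB's.2
    intro τ hτ
    have h := le_trans (le_max_right _ _) (hres τ hτ)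
    rwa [restrictBP_B'_s] at h

end Final

end PottsBP

open PottsBP in
/-- Let `X` be a boundary pair, let `R′ ⊆ R_X` contain `f_X`, and let `χ` be the set
of boundary pairs `X′` with region `R′`, distinguished edge `s_X`, whose boundary
configurations agree with those of `X` on the boundary edges common to `R′` and `R_X`.
Then `ν(X) ≤ max_{X′ ∈ χ} μ(X′)`  (formulated as: any upper bound `m` of
`{μ(X′) : X′ ∈ χ}` is an upper bound of `ν(X)`). -/
theorem nu_le_max_mu_of_subregion (q : ℕ) (hq : 2 ≤ q) (lam : ℝ)
    (hlam0 : 0 < lam) (hlam1 : lam ≤ 1)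
    (X : BoundaryPair q) (R' : Finset V) (hsub : R' ⊆ X.R) (hfR' : X.f ∈ R')
    (m : ℝ)
    (hm : ∀ X' : BoundaryPair q, X'.R = R' → X'.w = X.w → X'.f = X.f →
      (∀ u v, IsBdryEdge X.R u v → v ∈ R' → X'.B (u, v) = X.B (u, v)) →
      (∀ u v, IsBdryEdge X.R u v → v ∈ R' → X'.B' (u, v) = X.B' (u, v)) →
      mu X' lam ≤ m) :
    nu X lam ≤ m := by
  have hq1 : 1 ≤ q := by omega
  have hnn : ∀ r ∈ {r : ℝ | ∃ ψ, IsCoupling X lam ψ ∧ r = disagree X ψ}, (0:ℝ) ≤ r := by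
    rintro r ⟨ψ, hψ, rfl⟩
    rw [disagree, finsum_mem_def]
    apply finsum_nonneg
    intro p
    exact Set.indicator_nonneg (fun p _ => hψ.1 p) p
  have hmem : disagree X (psic X lam)
      ∈ {r : ℝ | ∃ ψ, IsCoupling X lam ψ ∧ r = disagree X ψ} :=
    ⟨psic X lam, psic_coupling X lam hlam0 hq1, rfl⟩
  have h1 : nu X lam ≤ disagree X (psic X lam) := csInf_le ⟨0, hnn⟩ hmem
  have h2 : disagree X (psic X lam) = Dtv X lam := disagree_psic X lam hlam0 hq1
  have h3 : Dtv X lam ≤ mu X lam := Dtv_le_mu X lam hlam0 hlam1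
  have h4 : mu X lam ≤ m := by
    apply mu_le_of_restrict X lam hlam0 hlam1 R' hsub hfR' m
    intro τ hτ
    exact hm (restrictBP X R' hsub hfR' τ) rfl rfl rfl
      (restrictBP_B_agree X R' hsub hfR' τ) (restrictBP_B'_agree X R' hsub hfR' τ)
  linarith
end

section
/- For every boundary pair X, ν(X) ≤ μ(X). -/
namespace PottsBP

variable {q : ℕ}

section Aux

lemma adj_cases {u v : V} (h : Adj u v) :
    u = (v.1 + 1, v.2) ∨ u = (v.1 - 1, v.2) ∨ u = (v.1, v.2 + 1) ∨ u = (v.1, v.2 - 1) := by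
  unfold Adj at h
  have h1 : (u.1 = v.1 + 1 ∧ u.2 = v.2) ∨ (u.1 = v.1 - 1 ∧ u.2 = v.2) ∨
      (u.1 = v.1 ∧ u.2 = v.2 + 1) ∨ (u.1 = v.1 ∧ u.2 = v.2 - 1) := by omega
  rcases h1 with h1 | h1 | h1 | h1 <;> simp [Prod.ext_iff, h1]

lemma bdry_finite (R : Finset V) : {p : V × V | IsBdryEdge R p.1 p.2}.Finite := by
  apply Set.Finite.subset
    ((R.biUnion fun v =>
      ({(v.1 + 1, v.2), (v.1 - 1, v.2), (v.1, v.2 + 1), (v.1, v.2 - 1)} : Finset V)).finite_toSet.prod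
      R.finite_toSet)
  rintro ⟨u, v⟩ ⟨hu, hv, hadj⟩
  refine ⟨?_, hv⟩
  simp only [Finset.coe_biUnion, Set.mem_iUnion, Finset.mem_coe, Finset.mem_insert,
    Finset.mem_singleton]
  exact ⟨v, hv, by rcases adj_cases hadj with h | h | h | h <;> simp at h <;> tauto⟩

lemma monFull_eq_monExS (X : BoundaryPair q) (Bc : V × V → ℕ)
    (hag : ∀ u v, IsBdryEdge X.R u v → (u, v) ≠ (X.w, X.f) → Bc (u, v) = X.B (u, v))
    (hb : 1 ≤ Bc (X.w, X.f)) (σ : V → ℕ) :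
    monFull X Bc σ = monExS X σ + (if Bc (X.w, X.f) = σ X.f then 1 else 0) := by
  unfold monFull monExS
  set S0 : Set (V × V) :=
    {p | IsBdryEdge X.R p.1 p.2 ∧ p ≠ (X.w, X.f) ∧ 1 ≤ X.B p ∧ X.B p = σ p.2} with hS0
  set S : Set (V × V) := {p | IsBdryEdge X.R p.1 p.2 ∧ 1 ≤ Bc p ∧ Bc p = σ p.2} with hS
  have hfin0 : S0.Finite := (bdry_finite X.R).subset (fun p hp => hp.1)
  have hBc : ∀ p : V × V, IsBdryEdge X.R p.1 p.2 → p ≠ (X.w, X.f) → Bc p = X.B p := by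
    intro p h hp
    have := hag p.1 p.2 h (by simpa using hp)
    simpa using this
  have hsub : ∀ p : V × V, p ≠ (X.w, X.f) → (p ∈ S ↔ p ∈ S0) := by
    intro p hp
    constructor
    · rintro ⟨h1, h2, h3⟩
      exact ⟨h1, hp, by rw [← hBc p h1 hp]; exact h2, by rw [← hBc p h1 hp]; exact h3⟩
    · rintro ⟨h1, _, h2, h3⟩
      exact ⟨h1, by rw [hBc p h1 hp]; exact h2, by rw [hBc p h1 hp]; exact h3⟩
  by_cases hcase : Bc (X.w, X.f) = σ X.f
  · rw [if_pos hcase]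
    have hSeq : S = insert (X.w, X.f) S0 := by
      ext p
      by_cases hp : p = (X.w, X.f)
      · subst hp
        simp only [Set.mem_insert_iff, true_or, iff_true]
        exact ⟨⟨X.hw, X.hf, X.hadj⟩, hb, hcase⟩
      · rw [Set.mem_insert_iff]
        simp only [hp, false_or]
        exact hsub p hp
    rw [hSeq, Set.ncard_insert_of_notMem (fun h => h.2.1 rfl) hfin0]
    omega
  · rw [if_neg hcase]
    have hSeq : S = S0 := by
      ext p
      by_cases hp : p = (X.w, X.f)
      · subst hp
        simp only [hS, hS0, Set.mem_setOf_eq]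
        constructor
        · rintro ⟨_, _, h3⟩; exact absurd h3 hcase
        · rintro ⟨_, h2, _⟩; exact absurd rfl h2
      · exact hsub p hp
    rw [hSeq, add_zero]

lemma Dalg (lam cb cb' c : ℝ) (hlam0 : 0 < lam) (hlam1 : lam ≤ 1) (hcb : 0 < cb)
    (hcb' : 0 < cb') (hc : 0 ≤ c) (hord : cb' ≤ cb) :
    cb' / (lam * cb + cb' + c) - lam * cb' / (cb + lam * cb' + c) +
      (c / (lam * cb + cb' + c) - c / (cb + lam * cb' + c)) ≤
      (1 - lam) * cb / ((1 + lam) * cb + c) := by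
  have hZ : 0 < lam * cb + cb' + c := by nlinarith [mul_pos hlam0 hcb]
  have hZ' : 0 < cb + lam * cb' + c := by nlinarith [mul_pos hlam0 hcb']
  have hW : 0 < (1 + lam) * cb + c := by nlinarith
  have key : cb' / (lam * cb + cb' + c) - lam * cb' / (cb + lam * cb' + c) +
      (c / (lam * cb + cb' + c) - c / (cb + lam * cb' + c)) =
      (1 - lam) * cb * ((1 + lam) * cb' + c) /
        ((lam * cb + cb' + c) * (cb + lam * cb' + c)) := by
    field_simp
    ring
  rw [key, div_le_div_iff₀ (by positivity) hW]
  nlinarith [mul_nonneg (mul_nonneg (mul_nonneg (sub_nonneg.2 hlam1) hcb.le) hlam0.le)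
      (sq_nonneg (cb - cb'))]

end Aux

end PottsBP


set_option maxHeartbeats 1000000 in
open PottsBP in
/-- For every boundary pair `X`, `ν(X) ≤ μ(X)`. -/
theorem nu_le_mu (q : ℕ) (hq : 2 ≤ q) (lam : ℝ) (hlam0 : 0 < lam) (hlam1 : lam ≤ 1)
    (X : BoundaryPair q) : nu X lam ≤ mu X lam := by
  classical
  obtain ⟨hb1, hb2⟩ := X.hBs
  obtain ⟨hb'1, hb'2⟩ := X.hB's
  set b := X.B (X.w, X.f) with hbdef
  set b' := X.B' (X.w, X.f) with hb'def
  set CF : Finset (V → ℕ) := (configs_finite q X.R).toFinset with hCFdef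
  have hmemCF : ∀ σ, σ ∈ CF ↔ σ ∈ Configs q X.R := fun σ => Set.Finite.mem_toFinset _
  set w : (V → ℕ) → ℝ := fun σ => lam ^ monExS X σ with hwdef
  have hwpos : ∀ σ, 0 < w σ := fun σ => pow_pos hlam0 _
  set T : Finset ℕ := Finset.Icc 1 q with hTdef
  have hbT : b ∈ T := Finset.mem_Icc.2 ⟨hb1, hb2⟩
  have hb'T : b' ∈ T := Finset.mem_Icc.2 ⟨hb'1, hb'2⟩
  have hmapsto : ∀ σ ∈ CF, σ X.f ∈ T :=
    fun σ hσ => Finset.mem_Icc.2 (((hmemCF σ).1 hσ).1 X.f X.hf)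
  -- `ci` as a Finset sum
  have hci : ∀ i, ci X lam i = ∑ σ ∈ CF.filter (fun σ => σ X.f = i), w σ := by
    intro i
    have hfin : ({σ ∈ Configs q X.R | σ X.f = i}).Finite :=
      (configs_finite q X.R).subset (fun σ hσ => hσ.1)
    simp only [ci]
    rw [finsum_mem_eq_finite_toFinset_sum _ hfin]
    apply Finset.sum_congr _ (fun _ _ => rfl)
    ext σ
    simp only [Set.Finite.mem_toFinset, Set.mem_setOf_eq, Finset.mem_filter, hmemCF]
  have hcipos : ∀ i ∈ T, 0 < ci X lam i := by
    intro i hi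
    obtain ⟨hi1, hi2⟩ := Finset.mem_Icc.1 hi
    rw [hci]
    apply Finset.sum_pos (fun σ _ => hwpos σ)
    refine ⟨fun v => if v ∈ X.R then i else 0, ?_⟩
    rw [Finset.mem_filter, hmemCF]
    exact ⟨⟨fun v hv => by simp [hv, hi1, hi2], fun v hv => by simp [hv]⟩, by simp [X.hf]⟩
  have hcine : ∀ i ∈ T, ci X lam i ≠ 0 := fun i hi => (hcipos i hi).ne'
  have hcOutnn : 0 ≤ cOut X lam := by
    simp only [cOut]
    apply Finset.sum_nonneg
    intro i hi
    refine (hcipos i ?_).le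
    rw [hTdef]
    exact Finset.mem_of_mem_filter i hi
  -- fiberwise decomposition
  have hfiber : ∀ g : ℕ → ℝ, ∑ σ ∈ CF, g (σ X.f) * w σ = ∑ i ∈ T, g i * ci X lam i := by
    intro g
    rw [← Finset.sum_fiberwise_of_maps_to hmapsto (fun σ => g (σ X.f) * w σ)]
    refine Finset.sum_congr rfl fun i _ => ?_
    rw [hci, Finset.mul_sum]
    refine Finset.sum_congr rfl fun σ hσ => ?_
    rw [(Finset.mem_filter.1 hσ).2]
  -- partition functions
  have hifswap : ∀ x y : ℕ, (if x = y then (1:ℕ) else 0) = (if y = x then 1 else 0) := by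
    intro x y
    rcases eq_or_ne x y with h | h
    · simp [h]
    · rw [if_neg h, if_neg (Ne.symm h)]
  have hmonB : ∀ σ, monFull X X.B σ = monExS X σ + (if σ X.f = b then 1 else 0) := by
    intro σ
    rw [monFull_eq_monExS X X.B (fun u v _ _ => rfl) hb1 σ, ← hbdef, hifswap]
  have hmonB' : ∀ σ, monFull X X.B' σ = monExS X σ + (if σ X.f = b' then 1 else 0) := by
    intro σ
    rw [monFull_eq_monExS X X.B' (fun u v h hne => (X.hagree u v h hne).symm) hb'1 σ,
      ← hb'def, hifswap]
  have hpowB : ∀ σ, lam ^ monFull X X.B σ = (if σ X.f = b then lam else 1) * w σ := by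
    intro σ
    rw [hmonB σ, pow_add, hwdef]
    split <;> simp [mul_comm]
  have hpowB' : ∀ σ, lam ^ monFull X X.B' σ = (if σ X.f = b' then lam else 1) * w σ := by
    intro σ
    rw [hmonB' σ, pow_add, hwdef]
    split <;> simp [mul_comm]
  have hZB : Zbp X lam X.B = ∑ i ∈ T, (if i = b then lam else 1) * ci X lam i := by
    simp only [Zbp]
    rw [finsum_mem_eq_finite_toFinset_sum _ (configs_finite q X.R), ← hCFdef, ← hfiber]
    exact Finset.sum_congr rfl fun σ _ => hpowB σ
  have hZB' : Zbp X lam X.B' = ∑ i ∈ T, (if i = b' then lam else 1) * ci X lam i := by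
    simp only [Zbp]
    rw [finsum_mem_eq_finite_toFinset_sum _ (configs_finite q X.R), ← hCFdef, ← hfiber]
    exact Finset.sum_congr rfl fun σ _ => hpowB' σ
  set ZB := Zbp X lam X.B with hZBdef
  set ZB' := Zbp X lam X.B' with hZB'def
  have hZBpos : 0 < ZB := by
    rw [hZB]
    refine Finset.sum_pos (fun i hi => mul_pos ?_ (hcipos i hi)) ⟨b, hbT⟩
    split
    · exact hlam0
    · norm_num
  have hZB'pos : 0 < ZB' := by
    rw [hZB']
    refine Finset.sum_pos (fun i hi => mul_pos ?_ (hcipos i hi)) ⟨b, hbT⟩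
    split
    · exact hlam0
    · norm_num
  -- probabilities and coupling data
  set P : ℕ → ℝ := fun i => (if i = b then lam else 1) * ci X lam i / ZB with hPdef
  set P' : ℕ → ℝ := fun i => (if i = b' then lam else 1) * ci X lam i / ZB' with hP'def
  set m : ℕ → ℝ := fun i => min (P i) (P' i) with hmdef
  set Aa : ℕ → ℝ := fun i => P i - m i with hAdef
  set Bb : ℕ → ℝ := fun i => P' i - m i with hBbdef
  set D : ℝ := ∑ i ∈ T, Aa i with hDdef
  have hPnn : ∀ i ∈ T, 0 ≤ P i := by
    intro i hi
    simp only [hPdef]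
    apply div_nonneg _ hZBpos.le
    refine mul_nonneg ?_ (hcipos i hi).le
    split
    · exact hlam0.le
    · norm_num
  have hP'nn : ∀ i ∈ T, 0 ≤ P' i := by
    intro i hi
    simp only [hP'def]
    apply div_nonneg _ hZB'pos.le
    refine mul_nonneg ?_ (hcipos i hi).le
    split
    · exact hlam0.le
    · norm_num
  have hmnn : ∀ i ∈ T, 0 ≤ m i := fun i hi => le_min (hPnn i hi) (hP'nn i hi)
  have hAnn : ∀ i ∈ T, 0 ≤ Aa i := fun i _ => sub_nonneg.2 (min_le_left _ _)
  have hBnn : ∀ i ∈ T, 0 ≤ Bb i := fun i _ => sub_nonneg.2 (min_le_right _ _)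
  have hABzero : ∀ i, Aa i * Bb i = 0 := by
    intro i
    rcases le_total (P i) (P' i) with h | h
    · have : Aa i = 0 := by
        simp only [hAdef, hmdef]
        rw [min_eq_left h, sub_self]
      rw [this, zero_mul]
    · have : Bb i = 0 := by
        simp only [hBbdef, hmdef]
        rw [min_eq_right h, sub_self]
      rw [this, mul_zero]
  have hDnn : 0 ≤ D := Finset.sum_nonneg hAnn
  have hPsum : ∑ i ∈ T, P i = 1 := by
    simp only [hPdef]
    rw [← Finset.sum_div, ← hZB, div_self hZBpos.ne']
  have hP'sum : ∑ i ∈ T, P' i = 1 := by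
    simp only [hP'def]
    rw [← Finset.sum_div, ← hZB', div_self hZB'pos.ne']
  have hBsum : ∑ i ∈ T, Bb i = D := by
    rw [hDdef]
    simp only [hAdef, hBbdef]
    rw [Finset.sum_sub_distrib, Finset.sum_sub_distrib, hPsum, hP'sum]
  -- the coupling
  set ψ : (V → ℕ) × (V → ℕ) → ℝ := fun p =>
    if p.1 ∈ Configs q X.R ∧ p.2 ∈ Configs q X.R then
      (if p.1 = p.2 then m (p.1 X.f) / ci X lam (p.1 X.f) * w p.1 else 0) +
        Aa (p.1 X.f) / ci X lam (p.1 X.f) * w p.1 *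
          (Bb (p.2 X.f) / ci X lam (p.2 X.f) * w p.2) / D
    else 0 with hψdef
  have hψnn : ∀ p, 0 ≤ ψ p := by
    intro p
    simp only [hψdef]
    by_cases hc : p.1 ∈ Configs q X.R ∧ p.2 ∈ Configs q X.R
    · rw [if_pos hc]
      have h1T : p.1 X.f ∈ T := hmapsto p.1 ((hmemCF p.1).2 hc.1)
      have h2T : p.2 X.f ∈ T := hmapsto p.2 ((hmemCF p.2).2 hc.2)
      apply add_nonneg
      · by_cases hd : p.1 = p.2
        · rw [if_pos hd]
          exact mul_nonneg (div_nonneg (hmnn _ h1T) (hcipos _ h1T).le) (hwpos _).le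
        · rw [if_neg hd]
      · exact div_nonneg (mul_nonneg
          (mul_nonneg (div_nonneg (hAnn _ h1T) (hcipos _ h1T).le) (hwpos _).le)
          (mul_nonneg (div_nonneg (hBnn _ h2T) (hcipos _ h2T).le) (hwpos _).le)) hDnn
    · rw [if_neg hc]
  have hGsum : ∑ σ' ∈ CF, Bb (σ' X.f) / ci X lam (σ' X.f) * w σ' = D := by
    have h := hfiber (fun j => Bb j / ci X lam j)
    rw [h, ← hBsum]
    exact Finset.sum_congr rfl fun j hj => div_mul_cancel₀ _ (hcine j hj)
  have hFsum : ∑ σ ∈ CF, Aa (σ X.f) / ci X lam (σ X.f) * w σ = D := by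
    have h := hfiber (fun j => Aa j / ci X lam j)
    rw [h, hDdef]
    exact Finset.sum_congr rfl fun j hj => div_mul_cancel₀ _ (hcine j hj)
  have hAzeroD : D = 0 → ∀ i ∈ T, Aa i = 0 := by
    intro h0
    exact (Finset.sum_eq_zero_iff_of_nonneg hAnn).1 (by rw [← hDdef]; exact h0)
  have hBzeroD : D = 0 → ∀ i ∈ T, Bb i = 0 := by
    intro h0
    exact (Finset.sum_eq_zero_iff_of_nonneg hBnn).1 (by rw [hBsum]; exact h0)
  -- marginals
  have hmarg1 : ∀ σ ∈ Configs q X.R,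
      (∑ᶠ σ' ∈ Configs q X.R, ψ (σ, σ')) = gibbsbp X lam X.B σ := by
    intro σ hσ
    have hσCF : σ ∈ CF := (hmemCF σ).2 hσ
    have hiT : σ X.f ∈ T := hmapsto σ hσCF
    rw [finsum_mem_eq_finite_toFinset_sum _ (configs_finite q X.R), ← hCFdef]
    have e1 : ∀ σ' ∈ CF, ψ (σ, σ') =
        (if σ = σ' then m (σ X.f) / ci X lam (σ X.f) * w σ else 0) +
          Aa (σ X.f) / ci X lam (σ X.f) * w σ *
            (Bb (σ' X.f) / ci X lam (σ' X.f) * w σ') / D := by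
      intro σ' hσ'
      simp only [hψdef]
      rw [if_pos ⟨hσ, (hmemCF σ').1 hσ'⟩]
    rw [Finset.sum_congr rfl e1, Finset.sum_add_distrib]
    have e2 : ∑ σ' ∈ CF, (if σ = σ' then m (σ X.f) / ci X lam (σ X.f) * w σ else 0) =
        m (σ X.f) / ci X lam (σ X.f) * w σ := by
      rw [Finset.sum_ite_eq CF σ (fun _ => m (σ X.f) / ci X lam (σ X.f) * w σ), if_pos hσCF]
    have e3 : ∑ σ' ∈ CF, Aa (σ X.f) / ci X lam (σ X.f) * w σ *
        (Bb (σ' X.f) / ci X lam (σ' X.f) * w σ') / D =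
        Aa (σ X.f) / ci X lam (σ X.f) * w σ := by
      rw [← Finset.sum_div, ← Finset.mul_sum, hGsum]
      rcases eq_or_ne D 0 with h0 | h0
      · rw [hAzeroD h0 _ hiT]
        simp
      · rw [mul_div_assoc, div_self h0, mul_one]
    rw [e2, e3]
    have e4 : m (σ X.f) + Aa (σ X.f) = P (σ X.f) := by
      simp [hAdef]
    have e5 : P (σ X.f) / ci X lam (σ X.f) = (if σ X.f = b then lam else 1) / ZB := by
      simp only [hPdef]
      rw [div_div, mul_comm ZB (ci X lam (σ X.f)), ← div_div,
        mul_div_assoc, div_self (hcine _ hiT), mul_one]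
    simp only [gibbsbp]
    rw [← hZBdef, hpowB σ]
    calc m (σ X.f) / ci X lam (σ X.f) * w σ + Aa (σ X.f) / ci X lam (σ X.f) * w σ
        = P (σ X.f) / ci X lam (σ X.f) * w σ := by rw [← e4]; ring
      _ = (if σ X.f = b then lam else 1) / ZB * w σ := by rw [e5]
      _ = (if σ X.f = b then lam else 1) * w σ / ZB := by ring
  have hmarg2 : ∀ σ' ∈ Configs q X.R,
      (∑ᶠ σ ∈ Configs q X.R, ψ (σ, σ')) = gibbsbp X lam X.B' σ' := by
    intro σ' hσ'
    have hσCF : σ' ∈ CF := (hmemCF σ').2 hσ'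
    have hiT : σ' X.f ∈ T := hmapsto σ' hσCF
    rw [finsum_mem_eq_finite_toFinset_sum _ (configs_finite q X.R), ← hCFdef]
    have e1 : ∀ σ ∈ CF, ψ (σ, σ') =
        (if σ = σ' then m (σ X.f) / ci X lam (σ X.f) * w σ else 0) +
          Aa (σ X.f) / ci X lam (σ X.f) * w σ *
            (Bb (σ' X.f) / ci X lam (σ' X.f) * w σ') / D := by
      intro σ hσ
      simp only [hψdef]
      rw [if_pos ⟨(hmemCF σ).1 hσ, hσ'⟩]
    rw [Finset.sum_congr rfl e1, Finset.sum_add_distrib]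
    have e2 : ∑ σ ∈ CF, (if σ = σ' then m (σ X.f) / ci X lam (σ X.f) * w σ else 0) =
        m (σ' X.f) / ci X lam (σ' X.f) * w σ' := by
      rw [Finset.sum_ite_eq' CF σ' (fun σ => m (σ X.f) / ci X lam (σ X.f) * w σ), if_pos hσCF]
    have e3 : ∑ σ ∈ CF, Aa (σ X.f) / ci X lam (σ X.f) * w σ *
        (Bb (σ' X.f) / ci X lam (σ' X.f) * w σ') / D =
        Bb (σ' X.f) / ci X lam (σ' X.f) * w σ' := by
      rw [← Finset.sum_div, ← Finset.sum_mul, hFsum]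
      rcases eq_or_ne D 0 with h0 | h0
      · rw [hBzeroD h0 _ hiT]
        simp
      · rw [mul_comm, mul_div_assoc, div_self h0, mul_one]
    rw [e2, e3]
    have e4 : m (σ' X.f) + Bb (σ' X.f) = P' (σ' X.f) := by
      simp [hBbdef]
    have e5 : P' (σ' X.f) / ci X lam (σ' X.f) = (if σ' X.f = b' then lam else 1) / ZB' := by
      simp only [hP'def]
      rw [div_div, mul_comm ZB' (ci X lam (σ' X.f)), ← div_div,
        mul_div_assoc, div_self (hcine _ hiT), mul_one]
    simp only [gibbsbp]
    rw [← hZB'def, hpowB' σ']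
    calc m (σ' X.f) / ci X lam (σ' X.f) * w σ' + Bb (σ' X.f) / ci X lam (σ' X.f) * w σ'
        = P' (σ' X.f) / ci X lam (σ' X.f) * w σ' := by rw [← e4]; ring
      _ = (if σ' X.f = b' then lam else 1) / ZB' * w σ' := by rw [e5]
      _ = (if σ' X.f = b' then lam else 1) * w σ' / ZB' := by ring
  have hcoup : IsCoupling X lam ψ := by
    refine ⟨hψnn, ?_, hmarg1, hmarg2⟩
    intro p hp
    simp only [hψdef]
    rw [if_neg (by tauto)]
  -- disagreement probability
  have hψsupp : ∀ p, ψ p ≠ 0 → p ∈ CF ×ˢ CF := by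
    intro p hp
    by_contra hnp
    apply hp
    simp only [hψdef]
    rw [if_neg]
    intro hcond
    exact hnp (Finset.mem_product.2 ⟨(hmemCF _).2 hcond.1, (hmemCF _).2 hcond.2⟩)
  have hdisD : disagree X ψ = D := by
    have hfinS : ({p : (V → ℕ) × (V → ℕ) | p.1 X.f ≠ p.2 X.f} ∩ Function.support ψ).Finite :=
      Set.Finite.subset (CF ×ˢ CF).finite_toSet
        (fun p hp => Finset.mem_coe.2 (hψsupp p hp.2))
    simp only [disagree]
    rw [finsum_mem_eq_sum _ hfinS]
    set Sf : Finset ((V → ℕ) × (V → ℕ)) := (CF ×ˢ CF).filter (fun p => p.1 X.f ≠ p.2 X.f)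
      with hSfdef
    have hsub : hfinS.toFinset ⊆ Sf := by
      intro p hp
      rw [Set.Finite.mem_toFinset] at hp
      exact Finset.mem_filter.2 ⟨hψsupp p hp.2, hp.1⟩
    have hzero : ∀ p ∈ Sf, p ∉ hfinS.toFinset → ψ p = 0 := by
      intro p hp hnp
      by_contra hne
      exact hnp (hfinS.mem_toFinset.2 ⟨(Finset.mem_filter.1 hp).2, hne⟩)
    rw [Finset.sum_subset hsub hzero]
    have e1 : ∀ p ∈ Sf, ψ p =
        Aa (p.1 X.f) / ci X lam (p.1 X.f) * w p.1 *
          (Bb (p.2 X.f) / ci X lam (p.2 X.f) * w p.2) / D := by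
      intro p hp
      obtain ⟨hpm, hpne⟩ := Finset.mem_filter.1 hp
      obtain ⟨h1, h2⟩ := Finset.mem_product.1 hpm
      simp only [hψdef]
      rw [if_pos ⟨(hmemCF _).1 h1, (hmemCF _).1 h2⟩,
        if_neg (fun he => hpne (by rw [he])), zero_add]
    rw [Finset.sum_congr rfl e1, hSfdef, Finset.sum_filter, Finset.sum_product]
    have inner : ∀ σ ∈ CF, (∑ σ' ∈ CF, if σ X.f ≠ σ' X.f then
        Aa (σ X.f) / ci X lam (σ X.f) * w σ *
          (Bb (σ' X.f) / ci X lam (σ' X.f) * w σ') / D else 0) =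
        Aa (σ X.f) / ci X lam (σ X.f) * w σ * (D - Bb (σ X.f)) / D := by
      intro σ hσ
      have hiT := hmapsto σ hσ
      have e2 : ∀ σ' ∈ CF, (if σ X.f ≠ σ' X.f then
          Aa (σ X.f) / ci X lam (σ X.f) * w σ *
            (Bb (σ' X.f) / ci X lam (σ' X.f) * w σ') / D else 0) =
          Aa (σ X.f) / ci X lam (σ X.f) * w σ *
            ((if σ X.f = σ' X.f then 0 else Bb (σ' X.f) / ci X lam (σ' X.f)) * w σ') / D := by
        intro σ' _
        by_cases h : σ X.f = σ' X.f
        · simp [h]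
        · simp [h]
      rw [Finset.sum_congr rfl e2, ← Finset.sum_div, ← Finset.mul_sum]
      have hf := hfiber (fun j => if σ X.f = j then 0 else Bb j / ci X lam j)
      rw [hf]
      have e3 : ∀ j ∈ T, (if σ X.f = j then 0 else Bb j / ci X lam j) * ci X lam j =
          Bb j - (if σ X.f = j then Bb j else 0) := by
        intro j hj
        by_cases h : σ X.f = j
        · simp [h]
        · rw [if_neg h, if_neg h, div_mul_cancel₀ _ (hcine j hj), sub_zero]
      rw [Finset.sum_congr rfl e3, Finset.sum_sub_distrib, hBsum,
        Finset.sum_ite_eq T (σ X.f) Bb, if_pos hiT]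
    rw [Finset.sum_congr rfl inner]
    have e4 : ∀ σ ∈ CF, Aa (σ X.f) / ci X lam (σ X.f) * w σ * (D - Bb (σ X.f)) / D =
        (Aa (σ X.f) * (D - Bb (σ X.f)) / D / ci X lam (σ X.f)) * w σ := by
      intro σ _
      ring
    rw [Finset.sum_congr rfl e4]
    have hf := hfiber (fun j => Aa j * (D - Bb j) / D / ci X lam j)
    rw [hf]
    have e5 : ∀ j ∈ T, Aa j * (D - Bb j) / D / ci X lam j * ci X lam j = Aa j * D / D := by
      intro j hj
      rw [div_mul_cancel₀ _ (hcine j hj), mul_sub, hABzero j, sub_zero]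
    rw [Finset.sum_congr rfl e5]
    rcases eq_or_ne D 0 with h0 | h0
    · rw [h0]
      simp
    · have e6 : ∀ j ∈ T, Aa j * D / D = Aa j := fun j _ => by
        rw [mul_div_assoc, div_self h0, mul_one]
      rw [Finset.sum_congr rfl e6, ← hDdef]
  -- nu ≤ D
  have hnuD : nu X lam ≤ D := by
    rw [← hdisD]
    apply csInf_le
    · refine ⟨0, ?_⟩
      rintro r ⟨φ, hφ, rfl⟩
      simp only [disagree]
      rw [finsum_mem_def]
      apply finsum_nonneg
      intro p
      exact Set.indicator_nonneg (fun p _ => hφ.1 p) p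
    · exact ⟨ψ, hcoup, rfl⟩
  -- D ≤ mu
  have hmub : (1 - lam) * ci X lam b / ((1 + lam) * ci X lam b + cOut X lam) ≤ mu X lam := by
    simp only [mu]
    rw [← hbdef]
    exact le_max_left _ _
  have hmub' : (1 - lam) * ci X lam b' / ((1 + lam) * ci X lam b' + cOut X lam) ≤ mu X lam := by
    simp only [mu]
    rw [← hb'def]
    exact le_max_right _ _
  rcases eq_or_ne b b' with hbb | hbb
  · -- identical boundary spins: D = 0
    have hZeq : ZB = ZB' := by rw [hZB, hZB', hbb]
    have hD0 : D = 0 := by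
      rw [hDdef]
      apply Finset.sum_eq_zero
      intro i hi
      have hPP : P i = P' i := by
        simp only [hPdef, hP'def]
        rw [hbb, hZeq]
      simp [hAdef, hmdef, hPP]
    refine le_trans hnuD (le_trans (le_of_eq hD0) (le_trans ?_ hmub))
    apply div_nonneg
    · exact mul_nonneg (by linarith) (hcipos b hbT).le
    · exact add_nonneg (mul_nonneg (by linarith) (hcipos b hbT).le) hcOutnn
  · -- distinct boundary spins
    set T2 : Finset ℕ := T.filter (fun i => i ≠ b ∧ i ≠ b') with hT2def
    have hcOut : cOut X lam = ∑ i ∈ T2, ci X lam i := by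
      simp only [cOut]
      rfl
    have hsplit : ∀ g : ℕ → ℝ, ∑ i ∈ T, g i = g b + g b' + ∑ i ∈ T2, g i := by
      intro g
      have h2 : b' ∉ T2 := by simp [hT2def, Finset.mem_filter]
      have h1 : b ∉ insert b' T2 := by
        intro hmem
        rcases Finset.mem_insert.1 hmem with h | h
        · exact hbb h
        · rw [hT2def, Finset.mem_filter] at h
          exact h.2.1 rfl
      have hTeq : T = insert b (insert b' T2) := by
        ext i
        simp only [Finset.mem_insert, hT2def, Finset.mem_filter]
        constructor
        · intro hi
          by_cases e1 : i = b
          · exact Or.inl e1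
          by_cases e2 : i = b'
          · exact Or.inr (Or.inl e2)
          · exact Or.inr (Or.inr ⟨hi, e1, e2⟩)
        · rintro (rfl | rfl | ⟨hi, -⟩)
          · exact hbT
          · exact hb'T
          · exact hi
      rw [hTeq, Finset.sum_insert h1, Finset.sum_insert h2, ← add_assoc]
    have hT2mem : ∀ i ∈ T2, i ∈ T ∧ i ≠ b ∧ i ≠ b' := by
      intro i hi
      rw [hT2def, Finset.mem_filter] at hi
      exact ⟨hi.1, hi.2⟩
    have hZBv : ZB = lam * ci X lam b + ci X lam b' + cOut X lam := by
      rw [hZB, hsplit (fun i => (if i = b then lam else 1) * ci X lam i)]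
      rw [if_pos rfl, if_neg (Ne.symm hbb), one_mul, hcOut]
      congr 1
      refine Finset.sum_congr rfl fun i hi => ?_
      rw [if_neg (hT2mem i hi).2.1, one_mul]
    have hZB'v : ZB' = ci X lam b + lam * ci X lam b' + cOut X lam := by
      rw [hZB', hsplit (fun i => (if i = b' then lam else 1) * ci X lam i)]
      rw [if_pos rfl, if_neg hbb, one_mul, hcOut]
      congr 1
      refine Finset.sum_congr rfl fun i hi => ?_
      rw [if_neg (hT2mem i hi).2.2, one_mul]
    have hcb := hcipos b hbT
    have hcb' := hcipos b' hb'T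
    rcases le_or_gt (ci X lam b') (ci X lam b) with hord | hord
    · -- c_{b'} ≤ c_b : use the b-branch of mu
      have hZBle : ZB ≤ ZB' := by
        rw [hZBv, hZB'v]
        nlinarith [mul_nonneg (sub_nonneg.2 hlam1) (sub_nonneg.2 hord)]
      have hPb : P b ≤ P' b := by
        simp only [hPdef, hP'def]
        rw [if_true, if_neg hbb, one_mul]
        rw [div_le_div_iff₀ hZBpos hZB'pos, hZBv, hZB'v]
        nlinarith [mul_nonneg (mul_nonneg hcb.le hcb'.le)
            (mul_nonneg (sub_nonneg.2 hlam1) (by linarith : (0:ℝ) ≤ 1 + lam)),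
          mul_nonneg (mul_nonneg hcb.le hcOutnn) (sub_nonneg.2 hlam1)]
      have hP'b' : P' b' ≤ P b' := by
        simp only [hPdef, hP'def]
        rw [if_true, if_neg (Ne.symm hbb), one_mul]
        rw [div_le_div_iff₀ hZB'pos hZBpos, hZBv, hZB'v]
        nlinarith [mul_nonneg (mul_nonneg hcb'.le hcb'.le)
            (mul_nonneg (sub_nonneg.2 hlam1) (by linarith : (0:ℝ) ≤ 1 + lam)),
          mul_nonneg (mul_nonneg hcb'.le hcOutnn) (sub_nonneg.2 hlam1)]
      have hAb : Aa b = 0 := by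
        simp only [hAdef, hmdef]
        rw [min_eq_left hPb, sub_self]
      have hAb' : Aa b' = ci X lam b' / ZB - lam * ci X lam b' / ZB' := by
        simp only [hAdef, hmdef]
        rw [min_eq_right hP'b']
        simp only [hPdef, hP'def]
        rw [if_true, if_neg (Ne.symm hbb), one_mul]
      have hAi : ∀ i ∈ T2, Aa i = ci X lam i / ZB - ci X lam i / ZB' := by
        intro i hi
        obtain ⟨hiT, hib, hib'⟩ := hT2mem i hi
        have hPi : P' i ≤ P i := by
          simp only [hPdef, hP'def]
          rw [if_neg hib, if_neg hib', one_mul]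
          exact div_le_div_of_nonneg_left (hcipos i hiT).le hZBpos hZBle
        simp only [hAdef, hmdef]
        rw [min_eq_right hPi]
        simp only [hPdef, hP'def]
        rw [if_neg hib, if_neg hib', one_mul]
      have hDv : D = ci X lam b' / ZB - lam * ci X lam b' / ZB' +
          (cOut X lam / ZB - cOut X lam / ZB') := by
        rw [hDdef, hsplit Aa, hAb, hAb', zero_add]
        congr 1
        rw [Finset.sum_congr rfl hAi, Finset.sum_sub_distrib, ← Finset.sum_div,
          ← Finset.sum_div, ← hcOut]
      have hkey := Dalg lam (ci X lam b) (ci X lam b') (cOut X lam) hlam0 hlam1 hcb hcb'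
        hcOutnn hord
      rw [← hZBv, ← hZB'v] at hkey
      refine le_trans hnuD (le_trans ?_ hmub)
      rw [hDv]
      exact hkey
    · -- c_b < c_{b'} : use the b'-branch of mu
      have hZB'le : ZB' ≤ ZB := by
        rw [hZBv, hZB'v]
        nlinarith [mul_nonneg (sub_nonneg.2 hlam1) (sub_nonneg.2 hord.le)]
      have hP'b : P' b' ≤ P b' := by
        simp only [hPdef, hP'def]
        rw [if_true, if_neg (Ne.symm hbb), one_mul]
        rw [div_le_div_iff₀ hZB'pos hZBpos, hZBv, hZB'v]
        nlinarith [mul_nonneg (mul_nonneg hcb'.le hcb.le)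
            (mul_nonneg (sub_nonneg.2 hlam1) (by linarith : (0:ℝ) ≤ 1 + lam)),
          mul_nonneg (mul_nonneg hcb'.le hcOutnn) (sub_nonneg.2 hlam1)]
      have hPb : P b ≤ P' b := by
        simp only [hPdef, hP'def]
        rw [if_true, if_neg hbb, one_mul]
        rw [div_le_div_iff₀ hZBpos hZB'pos, hZBv, hZB'v]
        nlinarith [mul_nonneg (mul_nonneg hcb.le hcb.le)
            (mul_nonneg (sub_nonneg.2 hlam1) (by linarith : (0:ℝ) ≤ 1 + lam)),
          mul_nonneg (mul_nonneg hcb.le hcOutnn) (sub_nonneg.2 hlam1)]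
      have hBb' : Bb b' = 0 := by
        simp only [hBbdef, hmdef]
        rw [min_eq_right hP'b, sub_self]
      have hBbb : Bb b = ci X lam b / ZB' - lam * ci X lam b / ZB := by
        simp only [hBbdef, hmdef]
        rw [min_eq_left hPb]
        simp only [hPdef, hP'def]
        rw [if_true, if_neg hbb, one_mul]
      have hBi : ∀ i ∈ T2, Bb i = ci X lam i / ZB' - ci X lam i / ZB := by
        intro i hi
        obtain ⟨hiT, hib, hib'⟩ := hT2mem i hi
        have hPi : P i ≤ P' i := by
          simp only [hPdef, hP'def]
          rw [if_neg hib, if_neg hib', one_mul]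
          exact div_le_div_of_nonneg_left (hcipos i hiT).le hZB'pos hZB'le
        simp only [hBbdef, hmdef]
        rw [min_eq_left hPi]
        simp only [hPdef, hP'def]
        rw [if_neg hib, if_neg hib', one_mul]
      have hDv : D = ci X lam b / ZB' - lam * ci X lam b / ZB +
          (cOut X lam / ZB' - cOut X lam / ZB) := by
        rw [← hBsum, hsplit Bb, hBb', hBbb, add_zero]
        congr 1
        rw [Finset.sum_congr rfl hBi, Finset.sum_sub_distrib, ← Finset.sum_div,
          ← Finset.sum_div, ← hcOut]
      have hkey := Dalg lam (ci X lam b') (ci X lam b) (cOut X lam) hlam0 hlam1 hcb' hcb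
        hcOutnn hord.le
      rw [show lam * ci X lam b' + ci X lam b + cOut X lam = ZB' from by rw [hZB'v]; ring,
        show ci X lam b' + lam * ci X lam b + cOut X lam = ZB from by rw [hZBv]; ring] at hkey
      refine le_trans hnuD (le_trans ?_ hmub')
      rw [hDv]
      exact hkey
end

section
/- Let λ ∈ (0,1] and let c₁, c₂, c be real numbers with c₁ ≥ c₂ ≥ 0, c₁ > 0, and c ≥ 0. Then c₁/(c₁ + λ·c₂ + c) − λ·c₁/(λ·c₁ + c₂ + c) ≤ (1−λ)·c₁/((1+λ)·c₁ + c). -/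
/-- Let `λ ∈ (0,1]` and let `c₁, c₂, c` be real numbers with `c₁ ≥ c₂ ≥ 0`, `c₁ > 0`
and `c ≥ 0`. Then
`c₁/(c₁ + λ·c₂ + c) − λ·c₁/(λ·c₁ + c₂ + c) ≤ (1−λ)·c₁/((1+λ)·c₁ + c)`. -/
theorem coupling_disagreement_bound (lam c₁ c₂ c : ℝ)
    (hlam0 : 0 < lam) (hlam1 : lam ≤ 1)
    (h21 : c₂ ≤ c₁) (h2 : 0 ≤ c₂) (h1 : 0 < c₁) (hc : 0 ≤ c) :
    c₁ / (c₁ + lam * c₂ + c) - lam * c₁ / (lam * c₁ + c₂ + c) ≤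
      (1 - lam) * c₁ / ((1 + lam) * c₁ + c) := by
  have d1 : 0 < c₁ + lam * c₂ + c := by positivity
  have d2 : 0 < lam * c₁ + c₂ + c := by nlinarith
  have d3 : 0 < (1 + lam) * c₁ + c := by nlinarith
  rw [div_sub_div _ _ (ne_of_gt d1) (ne_of_gt d2), div_le_div_iff₀ (by positivity) d3]
  nlinarith [mul_nonneg (mul_nonneg (sub_nonneg.2 hlam1) h1.le) (mul_nonneg hlam0.le (sq_nonneg (c₁ - c₂)))]
end

section
/- Let q ≥ 3 and λ ∈ (0,1]. Let v = 3 mod (q−2) and u = ⌊3/(q−2)⌋ (so u(q−2) + v = 3). Suppose X is a boundary pair whose region R_X consists of the single vertex f_X. Then μ(X) ≤ (1−λ)/(1 + λ + v·λ^{u+1} + (q−2−v)·λ^{u}). -/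
namespace PottsBP

variable {q : ℕ}

/-! ### Auxiliary lemmas -/

section Aux

def nbhd (f : V) : Finset V := {(f.1+1,f.2),(f.1-1,f.2),(f.1,f.2+1),(f.1,f.2-1)}

lemma mem_nbhd {u f : V} : u ∈ nbhd f ↔ Adj u f := by
  simp only [nbhd, Finset.mem_insert, Finset.mem_singleton, Adj, Prod.ext_iff]
  omega

lemma adj_ne {u f : V} (h : Adj u f) : u ≠ f := by
  rintro rfl
  simp only [Adj, sub_self, Int.natAbs_zero] at h
  omega

lemma nbhd_card (f : V) : (nbhd f).card = 4 := by
  obtain ⟨a, b⟩ := f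
  rw [nbhd]
  rw [Finset.card_insert_of_notMem
        (by simp only [Finset.mem_insert, Finset.mem_singleton, Prod.ext_iff]; omega),
      Finset.card_insert_of_notMem
        (by simp only [Finset.mem_insert, Finset.mem_singleton, Prod.ext_iff]; omega),
      Finset.card_insert_of_notMem
        (by simp only [Finset.mem_insert, Finset.mem_singleton, Prod.ext_iff]; omega)]
  rfl

lemma configs_single (q : ℕ) (f : V) (i : ℕ) (hi1 : 1 ≤ i) (hiq : i ≤ q) :
    {σ ∈ Configs q ({f} : Finset V) | σ f = i}
      = {fun v => if v = f then i else 0} := by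
  ext σ
  simp only [Set.mem_setOf_eq, Set.mem_singleton_iff, Configs, Finset.mem_singleton]
  constructor
  · rintro ⟨⟨h1, h2⟩, h3⟩
    funext v
    by_cases hv : v = f
    · simp [hv, h3]
    · simp [hv, h2 v hv]
  · rintro rfl
    refine ⟨⟨?_, ?_⟩, by simp⟩
    · rintro v rfl; simp [hi1, hiq]
    · intro v hv; simp [hv]

lemma monInt_single (f : V) (σ : V → ℕ) : monInt ({f} : Finset V) σ = 0 := by
  rw [monInt]
  convert Set.ncard_empty (Sym2 V)
  ext e
  simp only [Set.mem_setOf_eq, Set.mem_empty_iff_false, iff_false, Finset.mem_singleton]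
  rintro ⟨x, y, -, hadj, rfl, rfl, -⟩
  exact adj_ne hadj rfl

lemma monExS_single {q : ℕ} (X : BoundaryPair q) (hR : X.R = {X.f}) (i : ℕ) (hi : 1 ≤ i) :
    monExS X (fun v => if v = X.f then i else 0) =
      (((nbhd X.f).erase X.w).filter (fun u => X.B (u, X.f) = i)).card := by
  rw [monExS, hR, monInt_single, Nat.zero_add]
  have hset : {p : V × V | IsBdryEdge ({X.f} : Finset V) p.1 p.2 ∧ p ≠ (X.w, X.f) ∧
      1 ≤ X.B p ∧ X.B p = (fun v => if v = X.f then i else 0) p.2} =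
      ↑((((nbhd X.f).erase X.w).filter (fun u => X.B (u, X.f) = i)).image
        (fun u => (u, X.f))) := by
    ext ⟨a, b⟩
    simp only [Set.mem_setOf_eq, Finset.coe_image, Set.mem_image, Finset.mem_coe,
      Finset.mem_filter, Finset.mem_erase, IsBdryEdge, Finset.mem_singleton]
    constructor
    · rintro ⟨⟨ha, rfl, hadj⟩, hne, hle, heq⟩
      simp only [if_pos rfl] at heq
      exact ⟨a, ⟨⟨fun h => hne (by rw [h]), mem_nbhd.mpr hadj⟩, heq⟩, rfl⟩
    · rintro ⟨u, ⟨⟨huw, hun⟩, hB⟩, heq⟩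
      cases heq
      have hadj := mem_nbhd.mp hun
      refine ⟨⟨adj_ne hadj, rfl, hadj⟩, ?_, ?_, ?_⟩
      · intro h
        exact huw (congrArg Prod.fst h)
      · simp only [hB]; exact hi
      · simp [hB]
  rw [hset, Set.ncard_coe_finset,
    Finset.card_image_of_injective _ (fun x y h => congrArg Prod.fst h)]

lemma ci_single {q : ℕ} (X : BoundaryPair q) (lam : ℝ) (hR : X.R = {X.f})
    (i : ℕ) (hi1 : 1 ≤ i) (hiq : i ≤ q) :
    ci X lam i
      = lam ^ (((nbhd X.f).erase X.w).filter (fun u => X.B (u, X.f) = i)).card := by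
  rw [ci, hR, configs_single q X.f i hi1 hiq, finsum_mem_singleton,
    monExS_single X hR i hi1]

lemma aux_le_one (lam : ℝ) (h0 : 0 < lam) (h1 : lam ≤ 1) (d : ℕ) :
    lam ^ d * (1 + (d:ℝ) * (1 - lam)) ≤ 1 := by
  induction d with
  | zero => simp
  | succ d ih =>
    have hp : lam ^ d ≤ 1 := pow_le_one₀ h0.le h1
    have hpos : (0:ℝ) < lam ^ d := pow_pos h0 d
    rw [pow_succ]
    push_cast
    nlinarith [mul_le_mul_of_nonneg_left ih h0.le, mul_le_mul hp h1 h0.le one_pos.le]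

lemma pow_tangent (lam : ℝ) (h0 : 0 < lam) (h1 : lam ≤ 1) (u m : ℕ) :
    lam ^ u * (1 + (u:ℝ) * (1 - lam)) ≤ lam ^ m + (m:ℝ) * (lam ^ u * (1 - lam)) := by
  rcases le_total u m with h | h
  · obtain ⟨d, rfl⟩ := Nat.exists_eq_add_of_le h
    have hb : 1 + (d:ℝ) * (lam - 1) ≤ lam ^ d := by
      simpa using one_add_mul_le_pow (show (-2:ℝ) ≤ lam - 1 by linarith) d
    have hu : (0:ℝ) < lam ^ u := pow_pos h0 u
    rw [pow_add]
    push_cast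
    nlinarith [mul_le_mul_of_nonneg_left hb hu.le]
  · obtain ⟨d, rfl⟩ := Nat.exists_eq_add_of_le h
    have key := aux_le_one lam h0 h1 d
    have hm : (0:ℝ) < lam ^ m := pow_pos h0 m
    simp only [pow_add]
    push_cast
    nlinarith [mul_le_mul_of_nonneg_left key hm.le]

lemma key_sum (lam : ℝ) (h0 : 0 < lam) (h1 : lam ≤ 1) (k : ℕ) (hk : 1 ≤ k)
    (S : Finset ℕ) (m : ℕ → ℕ) (hcard : S.card = k) (hsum : ∑ i ∈ S, m i ≤ 3) :
    ((3 % k : ℕ) : ℝ) * lam ^ (3 / k + 1) + ((k - 3 % k : ℕ) : ℝ) * lam ^ (3 / k)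
      ≤ ∑ i ∈ S, lam ^ (m i) := by
  set u := 3 / k with hu
  set v := 3 % k with hv
  have hvk : v < k := Nat.mod_lt _ (by omega)
  have hdm : (k:ℝ) * (u:ℝ) + (v:ℝ) = 3 := by exact_mod_cast Nat.div_add_mod 3 k
  have hkv : ((k - v : ℕ):ℝ) = (k:ℝ) - (v:ℝ) := by
    rw [Nat.cast_sub hvk.le]
  have h2 : ∑ i ∈ S, (lam ^ u * (1 + (u:ℝ)*(1-lam)) - (m i : ℝ) * (lam ^ u * (1-lam)))
      ≤ ∑ i ∈ S, lam ^ (m i) :=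
    Finset.sum_le_sum fun i _ => by linarith [pow_tangent lam h0 h1 u (m i)]
  rw [Finset.sum_sub_distrib, Finset.sum_const, hcard, ← Finset.sum_mul] at h2
  have hms : ((∑ i ∈ S, (m i : ℝ))) ≤ 3 := by
    rw [← Nat.cast_sum]
    exact_mod_cast hsum
  have hX : (0:ℝ) ≤ lam ^ u * (1 - lam) := by
    have := pow_pos h0 u
    nlinarith
  have hms' : (∑ i ∈ S, (m i : ℝ)) * (lam ^ u * (1-lam)) ≤ 3 * (lam ^ u * (1-lam)) :=
    mul_le_mul_of_nonneg_right hms hX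
  have hnsmul : (k : ℕ) • (lam ^ u * (1 + (u:ℝ)*(1-lam)))
      = (k:ℝ) * (lam ^ u * (1 + (u:ℝ)*(1-lam))) := by
    simp [nsmul_eq_mul]
  rw [hnsmul] at h2
  rw [hkv]
  nlinarith [h2, hms', hX, hdm, pow_succ lam u]

end Aux

end PottsBP

open PottsBP in
/-- Let `q ≥ 3`, `λ ∈ (0,1]`, `v = 3 mod (q−2)` and `u = ⌊3/(q−2)⌋`. If `X` is a
boundary pair whose region consists of the single vertex `f_X`, then
`μ(X) ≤ (1−λ)/(1 + λ + v·λ^{u+1} + (q−2−v)·λ^u)`. -/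
theorem mu_single_vertex (q : ℕ) (hq : 3 ≤ q) (lam : ℝ)
    (hlam0 : 0 < lam) (hlam1 : lam ≤ 1)
    (X : BoundaryPair q) (hR : X.R = {X.f}) :
    mu X lam ≤ (1 - lam) /
      (1 + lam + ((3 % (q - 2) : ℕ) : ℝ) * lam ^ (3 / (q - 2) + 1)
        + ((q - 2 - 3 % (q - 2) : ℕ) : ℝ) * lam ^ (3 / (q - 2))) := by
  classical
  have hBsm := X.hBs
  have hB'sm := X.hB's
  set a := X.B (X.w, X.f) with ha
  set b := X.B' (X.w, X.f) with hb
  set m : ℕ → ℕ := fun i =>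
    (((nbhd X.f).erase X.w).filter (fun u => X.B (u, X.f) = i)).card with hm
  have hci : ∀ i, 1 ≤ i → i ≤ q → ci X lam i = lam ^ m i := fun i h1 h2 =>
    ci_single X lam hR i h1 h2
  -- the erased neighbourhood has 3 elements
  have hwmem : X.w ∈ nbhd X.f := mem_nbhd.mpr X.hadj
  have hT : ((nbhd X.f).erase X.w).card = 3 := by
    rw [Finset.card_erase_of_mem hwmem, nbhd_card]
  set S : Finset ℕ := (Finset.Icc 1 q).filter (fun i => i ≠ a ∧ i ≠ b) with hS
  -- total multiplicity over S is at most 3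
  have hsumm : ∑ i ∈ S, m i ≤ 3 := by
    have hdisj : ∀ i ∈ S, ∀ j ∈ S, i ≠ j →
        Disjoint (((nbhd X.f).erase X.w).filter (fun u => X.B (u, X.f) = i))
          (((nbhd X.f).erase X.w).filter (fun u => X.B (u, X.f) = j)) := by
      intro i _ j _ hij
      simp only [Finset.disjoint_left, Finset.mem_filter]
      rintro x ⟨hx, h1⟩ ⟨-, h2⟩
      exact hij (by rw [← h1, h2])
    calc ∑ i ∈ S, m i
        = (S.biUnion fun i =>
            ((nbhd X.f).erase X.w).filter fun u => X.B (u, X.f) = i).card :=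
          (Finset.card_biUnion hdisj).symm
      _ ≤ ((nbhd X.f).erase X.w).card :=
          Finset.card_le_card (Finset.biUnion_subset.mpr fun i _ =>
            Finset.filter_subset _ _)
      _ = 3 := hT
  -- S has at least q - 2 elements
  have hScard : q - 2 ≤ S.card := by
    have h2 : S.card + ((Finset.Icc 1 q).filter (fun i => ¬(i ≠ a ∧ i ≠ b))).card
        = (Finset.Icc 1 q).card := by
      rw [hS]
      exact Finset.card_filter_add_card_filter_not (fun i => i ≠ a ∧ i ≠ b)
    have h3 : ((Finset.Icc 1 q).filter (fun i => ¬(i ≠ a ∧ i ≠ b))).card ≤ 2 := by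
      calc ((Finset.Icc 1 q).filter (fun i => ¬(i ≠ a ∧ i ≠ b))).card
          ≤ ({a, b} : Finset ℕ).card := by
            apply Finset.card_le_card
            intro i hi
            simp only [Finset.mem_filter] at hi
            simp only [Finset.mem_insert, Finset.mem_singleton]
            tauto
        _ ≤ 2 := Finset.card_insert_le a {b} |>.trans (by simp)
    have h4 : (Finset.Icc 1 q).card = q := by simp
    omega
  obtain ⟨S', hS'sub, hS'card⟩ := Finset.exists_subset_card_eq hScard
  -- the key lower bound on cOut
  set D : ℝ := ((3 % (q - 2) : ℕ) : ℝ) * lam ^ (3 / (q - 2) + 1)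
      + ((q - 2 - 3 % (q - 2) : ℕ) : ℝ) * lam ^ (3 / (q - 2)) with hD
  have hDc : D ≤ cOut X lam := by
    have hkey := key_sum lam hlam0 hlam1 (q - 2) (by omega) S' m hS'card
      (le_trans (Finset.sum_le_sum_of_subset hS'sub) hsumm)
    have hstep : ∑ i ∈ S', lam ^ m i ≤ ∑ i ∈ S, lam ^ m i :=
      Finset.sum_le_sum_of_subset_of_nonneg hS'sub
        (fun i _ _ => (pow_pos hlam0 _).le)
    have hcoeq : cOut X lam = ∑ i ∈ S, lam ^ m i := by
      rw [cOut]
      apply Finset.sum_congr rfl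
      intro i hi
      simp only [hS, Finset.mem_filter, Finset.mem_Icc] at hi
      exact hci i hi.1.1 hi.1.2
    rw [hcoeq]
    exact le_trans hkey hstep
  have hD0 : 0 ≤ D := by
    have h1 := pow_pos hlam0 (3 / (q - 2) + 1)
    have h2 := pow_pos hlam0 (3 / (q - 2))
    have h3 : (0:ℝ) ≤ ((3 % (q - 2) : ℕ) : ℝ) := Nat.cast_nonneg _
    have h4 : (0:ℝ) ≤ ((q - 2 - 3 % (q - 2) : ℕ) : ℝ) := Nat.cast_nonneg _
    rw [hD]; positivity
  have hc0 : 0 ≤ cOut X lam := le_trans hD0 hDc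
  -- the main per-spin bound
  have main : ∀ i, 1 ≤ i → i ≤ q →
      (1 - lam) * ci X lam i / ((1 + lam) * ci X lam i + cOut X lam)
        ≤ (1 - lam) / (1 + lam + D) := by
    intro i hi1 hiq
    rw [hci i hi1 hiq]
    have hpow : (0:ℝ) < lam ^ m i := pow_pos hlam0 _
    have hpow1 : lam ^ m i ≤ 1 := pow_le_one₀ hlam0.le hlam1
    rw [div_le_div_iff₀ (by nlinarith) (by nlinarith)]
    have h5 : lam ^ m i * D ≤ cOut X lam := by
      nlinarith [mul_le_mul_of_nonneg_right hpow1 hD0]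
    nlinarith [mul_le_mul_of_nonneg_left h5 (by linarith : (0:ℝ) ≤ 1 - lam)]
  rw [mu]
  have goal_eq : (1 - lam) /
      (1 + lam + ((3 % (q - 2) : ℕ) : ℝ) * lam ^ (3 / (q - 2) + 1)
        + ((q - 2 - 3 % (q - 2) : ℕ) : ℝ) * lam ^ (3 / (q - 2)))
      = (1 - lam) / (1 + lam + D) := by
    rw [hD]; ring_nf
  rw [goal_eq]
  exact max_le (main a hBsm.1 hBsm.2) (main b hB'sm.1 hB'sm.2)
end

section
/- Let Δ ≥ 1 and q ≥ Δ + 1 be integers and let λ ∈ (0,1]. Let n : {1,…,q} → ℕ satisfy n₁ + n₂ + ⋯ + n_q ≤ Δ − 1 (n_i counts the boundary edges other than the distinguished edge that are assigned spin i at a single vertex of degree at most Δ). Set c_i = λ^{n_i} for i with n_i counted, let c = Σ_{i=3}^{q} λ^{n_i}, and assume without loss of generality n₂ ≥ n₁ (so c₁ ≥ c₂). Then max( (1−λ)·c₁/((1+λ)·c₁ + c), (1−λ)·c₂/((1+λ)·c₂ + c) ) ≤ (1−λ)/(q − Δ(1−λ)). -/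
lemma svmb_aux (Δ q : ℕ) (lam c x : ℝ) (hlam0 : 0 < lam) (hlam1 : lam ≤ 1)
    (hq : Δ + 1 ≤ q) (hc0 : 0 ≤ c)
    (hcK : (q : ℝ) - 1 - lam - (Δ : ℝ) * (1 - lam) ≤ c)
    (hx0 : 0 < x) (hx1 : x ≤ 1) :
    (1 - lam) * x / ((1 + lam) * x + c) ≤
      (1 - lam) / ((q : ℝ) - (Δ : ℝ) * (1 - lam)) := by
  have hqr : (Δ : ℝ) + 1 ≤ q := by exact_mod_cast hq
  have hR : 0 < (q : ℝ) - (Δ : ℝ) * (1 - lam) := by nlinarith [Nat.cast_nonneg (α := ℝ) Δ]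
  have hD : 0 < (1 + lam) * x + c := by nlinarith
  rw [div_le_div_iff₀ hD hR]
  set K : ℝ := (q : ℝ) - 1 - lam - (Δ : ℝ) * (1 - lam) with hK
  have hxK : x * K ≤ c := by
    rcases le_or_gt K 0 with h | h
    · nlinarith
    · nlinarith
  nlinarith

/-- Let `Δ ≥ 1` and `q ≥ Δ + 1` be integers and let `λ ∈ (0,1]`. Let
`n : {1,…,q} → ℕ` satisfy `n₁ + ⋯ + n_q ≤ Δ − 1` and `n₂ ≥ n₁`. With `c_i = λ^{n_i}`
and `c = Σ_{i=3}^q λ^{n_i}`, we have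
`max((1−λ)c₁/((1+λ)c₁+c), (1−λ)c₂/((1+λ)c₂+c)) ≤ (1−λ)/(q − Δ(1−λ))`. -/
theorem single_vertex_mu_bound_general_degree (Δ q : ℕ) (hΔ : 1 ≤ Δ)
    (hq : Δ + 1 ≤ q) (lam : ℝ) (hlam0 : 0 < lam) (hlam1 : lam ≤ 1)
    (n : ℕ → ℕ) (hsum : ∑ i ∈ Finset.Icc 1 q, n i ≤ Δ - 1) (h21 : n 1 ≤ n 2) :
    max ((1 - lam) * lam ^ n 1 /
          ((1 + lam) * lam ^ n 1 + ∑ i ∈ Finset.Icc 3 q, lam ^ n i))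
        ((1 - lam) * lam ^ n 2 /
          ((1 + lam) * lam ^ n 2 + ∑ i ∈ Finset.Icc 3 q, lam ^ n i)) ≤
      (1 - lam) / ((q : ℝ) - (Δ : ℝ) * (1 - lam)) := by
  set c : ℝ := ∑ i ∈ Finset.Icc 3 q, lam ^ n i with hc
  have hc0 : 0 ≤ c :=
    Finset.sum_nonneg fun i _ => le_of_lt (pow_pos hlam0 _)
  -- Bernoulli lower bound on each summand
  have hpow : ∀ i, 1 - (n i : ℝ) * (1 - lam) ≤ lam ^ n i := by
    intro i
    have h := one_add_mul_le_pow (a := lam - 1) (by linarith) (n i)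
    have he : (1 : ℝ) + (lam - 1) = lam := by ring
    rw [he] at h
    nlinarith
  -- sum of n over Icc 3 q bounded by Δ - 1
  have hsub : Finset.Icc 3 q ⊆ Finset.Icc 1 q := by
    intro i hi
    simp only [Finset.mem_Icc] at hi ⊢
    omega
  have hsum3 : ∑ i ∈ Finset.Icc 3 q, n i ≤ Δ - 1 :=
    le_trans (Finset.sum_le_sum_of_subset hsub) hsum
  have hsum3' : ∑ i ∈ Finset.Icc 3 q, (n i : ℝ) ≤ (Δ : ℝ) - 1 := by
    have h1 : ((∑ i ∈ Finset.Icc 3 q, n i : ℕ) : ℝ) ≤ ((Δ - 1 : ℕ) : ℝ) := by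
      exact_mod_cast hsum3
    rw [Nat.cast_sum] at h1
    have h2 : ((Δ - 1 : ℕ) : ℝ) = (Δ : ℝ) - 1 := by
      rw [Nat.cast_sub hΔ]; simp
    linarith [h1, h2.le, h2.ge]
  have hcard : (Finset.Icc 3 q).card = q - 2 := by
    rw [Nat.card_Icc]; omega
  have hcard' : ((Finset.Icc 3 q).card : ℝ) = (q : ℝ) - 2 := by
    rw [hcard, Nat.cast_sub (by omega)]; norm_num
  have hcK : (q : ℝ) - 1 - lam - (Δ : ℝ) * (1 - lam) ≤ c := by
    have h1 : ∑ i ∈ Finset.Icc 3 q, (1 - (n i : ℝ) * (1 - lam)) ≤ c :=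
      Finset.sum_le_sum fun i _ => hpow i
    have h2 : ∑ i ∈ Finset.Icc 3 q, (1 - (n i : ℝ) * (1 - lam)) =
        ((Finset.Icc 3 q).card : ℝ) - (∑ i ∈ Finset.Icc 3 q, (n i : ℝ)) * (1 - lam) := by
      rw [Finset.sum_sub_distrib, Finset.sum_const, nsmul_eq_mul, mul_one,
        ← Finset.sum_mul]
    rw [h2, hcard'] at h1
    nlinarith [hsum3']
  have hx : ∀ m : ℕ, 0 < lam ^ m ∧ lam ^ m ≤ 1 := fun m =>
    ⟨pow_pos hlam0 m, pow_le_one₀ (le_of_lt hlam0) hlam1⟩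
  exact max_le
    (svmb_aux Δ q lam c _ hlam0 hlam1 hq hc0 hcK (hx (n 1)).1 (hx (n 1)).2)
    (svmb_aux Δ q lam c _ hlam0 hlam1 hq hc0 hcK (hx (n 2)).1 (hx (n 2)).2)
end
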